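/- arXiv:1102.1259 — 2 statements merged into one kernel-verified Lean document; each statement's English description precedes it below -/
import Mathlib

section
/- There exist constants ϖ > 0 and Γ₁ ≥ 0, depending only on β, δ, k and ‖f‖ (but not on the particular solution), such that for every classical solution u of the beam equation there exists Γ₀ ≥ 0 (depending only on the initial data u(·,0), ∂ₜu(·,0)) with E(t) ≤ Γ₀·e^{−ϖt} + Γ₁ for all t ≥ 0. In particular, every ball of ‖(u, ∂ₜu)‖²-radius greater than 1 + Γ₁ is an absorbing set: every solution eventually enters it and remains in it. -/
open Real Set MeasureTheory

/-- spatial derivative `∂ₓu(x,t)`. -/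
noncomputable def ux (u : ℝ → ℝ → ℝ) (x t : ℝ) : ℝ := deriv (fun y => u y t) x

/-- second spatial derivative `∂ₓₓu(x,t)`. -/
noncomputable def uxx (u : ℝ → ℝ → ℝ) (x t : ℝ) : ℝ := iteratedDeriv 2 (fun y => u y t) x

/-- fourth spatial derivative `∂ₓₓₓₓu(x,t)`. -/
noncomputable def uxxxx (u : ℝ → ℝ → ℝ) (x t : ℝ) : ℝ := iteratedDeriv 4 (fun y => u y t) x

/-- time derivative `∂ₜu(x,t)`. -/
noncomputable def ut (u : ℝ → ℝ → ℝ) (x t : ℝ) : ℝ := deriv (fun s => u x s) t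

/-- second time derivative `∂ₜₜu(x,t)`. -/
noncomputable def utt (u : ℝ → ℝ → ℝ) (x t : ℝ) : ℝ := iteratedDeriv 2 (fun s => u x s) t

/-- `u` is a classical (smooth) solution of the beam equation
`∂ₜₜu + ∂ₓₓₓₓu - (β + ∫₀¹ (∂ₓu)² dξ) ∂ₓₓu = -ku - δ∂ₜu + f` on `[0,1] × [0,∞)`
with hinged boundary conditions. -/
def IsBeamSol (k δ β : ℝ) (f : ℝ → ℝ) (u : ℝ → ℝ → ℝ) : Prop :=
  ContDiff ℝ (⊤ : ℕ∞) (fun p : ℝ × ℝ => u p.1 p.2) ∧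
  (∀ x ∈ Icc (0:ℝ) 1, ∀ t ∈ Ici (0:ℝ),
    utt u x t + uxxxx u x t
      - (β + ∫ ξ in (0:ℝ)..1, (ux u ξ t)^2) * uxx u x t
      = -k * u x t - δ * ut u x t + f x) ∧
  (∀ t ∈ Ici (0:ℝ), u 0 t = 0 ∧ u 1 t = 0 ∧ uxx u 0 t = 0 ∧ uxx u 1 t = 0)

/-- (Twice the) energy: `E(t) = ‖∂ₓₓu(·,t)‖² + ‖∂ₜu(·,t)‖²` in `L²(0,1)`. -/
noncomputable def beamEnergy (u : ℝ → ℝ → ℝ) (t : ℝ) : ℝ :=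
  (∫ x in (0:ℝ)..1, (uxx u x t)^2) + ∫ x in (0:ℝ)..1, (ut u x t)^2

set_option maxHeartbeats 2000000

noncomputable def Dx (g : ℝ → ℝ → ℝ) (x t : ℝ) : ℝ := deriv (fun y => g y t) x
noncomputable def Dt (g : ℝ → ℝ → ℝ) (x t : ℝ) : ℝ := deriv (fun s => g x s) t
def Sm (g : ℝ → ℝ → ℝ) : Prop := ContDiff ℝ (⊤ : ℕ∞) (fun p : ℝ × ℝ => g p.1 p.2)


namespace Sm

lemma contLine_x (h : Sm g) (t : ℝ) : ContDiff ℝ (⊤ : ℕ∞) (fun y => g y t) :=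
  h.comp (contDiff_id.prodMk contDiff_const)

lemma contLine_t (h : Sm g) (x : ℝ) : ContDiff ℝ (⊤ : ℕ∞) (fun s => g x s) :=
  h.comp (contDiff_const.prodMk contDiff_id)

lemma cont (h : Sm g) : Continuous (fun p : ℝ × ℝ => g p.1 p.2) := h.continuous

lemma hasDerivAt_x (h : Sm g) (x t : ℝ) :
    HasDerivAt (fun y => g y t)
      (fderiv ℝ (fun p : ℝ × ℝ => g p.1 p.2) (x, t) (1, 0)) x := by
  have h1 : HasDerivAt (fun y : ℝ => ((y, t) : ℝ × ℝ)) (1, 0) x :=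
    (hasDerivAt_id x).prodMk (hasDerivAt_const x t)
  exact ((h.differentiable (by simp) (x, t)).hasFDerivAt).comp_hasDerivAt x h1

lemma hasDerivAt_t (h : Sm g) (x t : ℝ) :
    HasDerivAt (fun s => g x s)
      (fderiv ℝ (fun p : ℝ × ℝ => g p.1 p.2) (x, t) (0, 1)) t := by
  have h1 : HasDerivAt (fun s : ℝ => ((x, s) : ℝ × ℝ)) (0, 1) t :=
    (hasDerivAt_const t x).prodMk (hasDerivAt_id t)
  exact ((h.differentiable (by simp) (x, t)).hasFDerivAt).comp_hasDerivAt t h1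

lemma dx_eq (h : Sm g) (x t : ℝ) :
    Dx g x t = fderiv ℝ (fun p : ℝ × ℝ => g p.1 p.2) (x, t) (1, 0) :=
  (h.hasDerivAt_x x t).deriv

lemma dt_eq (h : Sm g) (x t : ℝ) :
    Dt g x t = fderiv ℝ (fun p : ℝ × ℝ => g p.1 p.2) (x, t) (0, 1) :=
  (h.hasDerivAt_t x t).deriv

lemma smooth_apply_fderiv (h : Sm g) (v : ℝ × ℝ) :
    ContDiff ℝ (⊤ : ℕ∞) (fun p : ℝ × ℝ => fderiv ℝ (fun q : ℝ × ℝ => g q.1 q.2) p v) :=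
  (h.fderiv_right (by simp)).clm_apply contDiff_const

lemma dx (h : Sm g) : Sm (Dx g) := by
  have : (fun p : ℝ × ℝ => Dx g p.1 p.2)
      = fun p : ℝ × ℝ => fderiv ℝ (fun q : ℝ × ℝ => g q.1 q.2) p (1, 0) := by
    ext p; exact h.dx_eq p.1 p.2
  rw [Sm, this]; exact h.smooth_apply_fderiv (1, 0)

lemma dt (h : Sm g) : Sm (Dt g) := by
  have : (fun p : ℝ × ℝ => Dt g p.1 p.2)
      = fun p : ℝ × ℝ => fderiv ℝ (fun q : ℝ × ℝ => g q.1 q.2) p (0, 1) := by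
    ext p; exact h.dt_eq p.1 p.2
  rw [Sm, this]; exact h.smooth_apply_fderiv (0, 1)

lemma fderiv_apply_eq (h : Sm g) (v w : ℝ × ℝ) (p : ℝ × ℝ) :
    fderiv ℝ (fun q : ℝ × ℝ => fderiv ℝ (fun r : ℝ × ℝ => g r.1 r.2) q v) p w
      = fderiv ℝ (fderiv ℝ (fun r : ℝ × ℝ => g r.1 r.2)) p w v := by
  set G := fun r : ℝ × ℝ => g r.1 r.2 with hG
  have hd : DifferentiableAt ℝ (fderiv ℝ G) p :=
    ((h.fderiv_right (m := (⊤ : ℕ∞)) (by simp)).differentiable (by simp)) p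
  rw [fderiv_clm_apply hd (differentiableAt_const v)]
  simp

/-- Clairaut. -/
lemma clairaut (h : Sm g) (x t : ℝ) : Dt (Dx g) x t = Dx (Dt g) x t := by
  set G := fun r : ℝ × ℝ => g r.1 r.2 with hG
  have hGd : ContDiff ℝ (⊤ : ℕ∞) (fderiv ℝ G) := h.fderiv_right (m := (⊤ : ℕ∞)) (by simp)
  have hfd : HasFDerivAt (fderiv ℝ G) (fderiv ℝ (fderiv ℝ G) (x, t)) (x, t) :=
    ((hGd.differentiable (by simp)) (x, t)).hasFDerivAt
  have hsym := second_derivative_symmetric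
    (f := G) (f' := fderiv ℝ G) (f'' := fderiv ℝ (fderiv ℝ G) (x, t))
    (fun y => ((h.differentiable (by simp)) y).hasFDerivAt) hfd (0, 1) (1, 0)
  have e1 : Dt (Dx g) x t = fderiv ℝ (fderiv ℝ G) (x, t) (0, 1) (1, 0) := by
    rw [(h.dx).dt_eq x t]
    have : (fun p : ℝ × ℝ => Dx g p.1 p.2)
        = fun p : ℝ × ℝ => fderiv ℝ G p (1, 0) := by
      ext p; exact h.dx_eq p.1 p.2
    rw [this, h.fderiv_apply_eq (1, 0) (0, 1) (x, t)]
  have e2 : Dx (Dt g) x t = fderiv ℝ (fderiv ℝ G) (x, t) (1, 0) (0, 1) := by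
    rw [(h.dt).dx_eq x t]
    have : (fun p : ℝ × ℝ => Dt g p.1 p.2)
        = fun p : ℝ × ℝ => fderiv ℝ G p (0, 1) := by
      ext p; exact h.dt_eq p.1 p.2
    rw [this, h.fderiv_apply_eq (0, 1) (1, 0) (x, t)]
  rw [e1, e2, hsym]

lemma hasDerivAt_t' (h : Sm g) (x t : ℝ) :
    HasDerivAt (fun s => g x s) (Dt g x t) t :=
  ((h.contLine_t x).differentiable (by simp) t).hasDerivAt

/-- differentiation under the integral sign -/
lemma hasDerivAt_integral {c : ℝ → ℝ} (hc : ContinuousOn c (Icc (0:ℝ) 1))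
    (h : Sm g) (t₀ : ℝ) :
    HasDerivAt (fun t => ∫ x in (0:ℝ)..1, c x * g x t)
      (∫ x in (0:ℝ)..1, c x * Dt g x t₀) t₀ := by
  -- bound for c
  obtain ⟨Cc, hCc⟩ := (isCompact_Icc (a := (0:ℝ)) (b := 1)).exists_bound_of_continuousOn hc
  -- bound for Dt g on the compact K
  have hDt : Sm (Dt g) := h.dt
  have hDtc : Continuous (fun p : ℝ × ℝ => Dt g p.1 p.2) := hDt.continuous
  obtain ⟨C, hC⟩ := ((isCompact_Icc (a := (0:ℝ)) (b := 1)).prod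
    (isCompact_Icc (a := t₀ - 1) (b := t₀ + 1))).exists_bound_of_continuousOn
    hDtc.continuousOn
  set μ := volume.restrict (Ioc (0:ℝ) 1) with hμ
  have key := hasDerivAt_integral_of_dominated_loc_of_deriv_le
    (μ := μ) (F := fun t x => c x * g x t) (F' := fun t x => c x * Dt g x t)
    (x₀ := t₀) (bound := fun _ => |Cc| * |C|) (s := Metric.ball t₀ 1) (Metric.ball_mem_nhds t₀ one_pos)
    ?_ ?_ ?_ ?_ ?_ ?_
  · have e1 : (fun t => ∫ x in (0:ℝ)..1, c x * g x t)
        = fun t => ∫ x, c x * g x t ∂μ := by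
      ext t; rw [intervalIntegral.integral_of_le zero_le_one]
    have e2 : (∫ x in (0:ℝ)..1, c x * Dt g x t₀) = ∫ x, c x * Dt g x t₀ ∂μ := by
      rw [intervalIntegral.integral_of_le zero_le_one]
    rw [e1, e2]; exact key.2
  · refine Filter.Eventually.of_forall (fun t => ?_)
    exact ((hc.mono Ioc_subset_Icc_self).aestronglyMeasurable measurableSet_Ioc).mul
      ((h.contLine_x t).continuous.aestronglyMeasurable.restrict)
  · have hco : ContinuousOn (fun x => c x * g x t₀) (Icc 0 1) :=
      hc.mul ((h.contLine_x t₀).continuous.continuousOn)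
    exact (hco.integrableOn_compact isCompact_Icc).mono_set Ioc_subset_Icc_self
  · exact ((hc.mono Ioc_subset_Icc_self).aestronglyMeasurable measurableSet_Ioc).mul
      ((hDtc.comp (continuous_id.prodMk continuous_const)).aestronglyMeasurable.restrict)
  · rw [hμ, ae_restrict_iff' measurableSet_Ioc]
    refine Filter.Eventually.of_forall (fun a ha t ht => ?_)
    have ha' : a ∈ Icc (0:ℝ) 1 := Ioc_subset_Icc_self ha
    have ht' : t ∈ Icc (t₀-1) (t₀+1) := by
      have := Metric.mem_ball.1 ht
      constructor <;> [skip; skip] <;>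
        · have := abs_lt.1 (by simpa [Real.dist_eq] using this); linarith [this.1, this.2]
    calc ‖c a * Dt g a t‖ = |c a| * |Dt g a t| := abs_mul _ _
      _ ≤ |Cc| * |C| := by
        refine mul_le_mul ?_ ?_ (abs_nonneg _) (abs_nonneg _)
        · exact (hCc a ha').trans (le_abs_self _)
        · exact (hC (a, t) ⟨ha', ht'⟩).trans (le_abs_self _)
  · exact integrable_const _
  · refine Filter.Eventually.of_forall (fun a t _ => ?_)
    exact (h.hasDerivAt_t' a t).const_mul (c a)

end Sm


section CSIBP
open intervalIntegral


lemma cs_integral {f g : ℝ → ℝ} {a b : ℝ} (hab : a ≤ b)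
    (hf : ContinuousOn f (Icc a b)) (hg : ContinuousOn g (Icc a b)) :
    (∫ x in a..b, f x * g x)^2 ≤ (∫ x in a..b, f x^2) * (∫ x in a..b, g x^2) := by
  have hu : Icc a b = uIcc a b := (uIcc_of_le hab).symm
  have hfu : ContinuousOn f (uIcc a b) := hu ▸ hf
  have hgu : ContinuousOn g (uIcc a b) := hu ▸ hg
  have hfi : IntervalIntegrable (fun x => f x ^ 2) volume a b :=
    (hfu.pow 2).intervalIntegrable
  have hgi : IntervalIntegrable (fun x => g x ^ 2) volume a b :=
    (hgu.pow 2).intervalIntegrable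
  have hfgi : IntervalIntegrable (fun x => f x * g x) volume a b :=
    (hfu.mul hgu).intervalIntegrable
  set A := ∫ x in a..b, f x ^ 2 with hA
  set B := ∫ x in a..b, f x * g x with hB
  set C := ∫ x in a..b, g x ^ 2 with hC
  have key : ∀ lam : ℝ, 0 ≤ C * (lam * lam) + (2 * B) * lam + A := by
    intro lam
    have e : ∀ x : ℝ, (lam * g x + f x)^2
        = lam^2 * g x ^2 + (2 * lam) * (f x * g x) + f x ^ 2 := by intro x; ring
    have : (0:ℝ) ≤ ∫ x in a..b, (lam * g x + f x)^2 :=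
      intervalIntegral.integral_nonneg hab (fun x _ => sq_nonneg _)
    calc (0:ℝ) ≤ ∫ x in a..b, (lam * g x + f x)^2 := this
      _ = lam^2 * C + (2*lam) * B + A := by
          simp_rw [e]
          rw [intervalIntegral.integral_add (((hgi.const_mul _).add
            (hfgi.const_mul _))) hfi,
            intervalIntegral.integral_add (hgi.const_mul _) (hfgi.const_mul _),
            intervalIntegral.integral_const_mul, intervalIntegral.integral_const_mul]
      _ = C * (lam * lam) + (2 * B) * lam + A := by ring
  have hd := discrim_le_zero key
  rw [discrim] at hd
  nlinarith [hd]

lemma poincare {h : ℝ → ℝ} (hh : ContDiff ℝ (⊤ : ℕ∞) h) (h0 : h 0 = 0) :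
    ∫ x in (0:ℝ)..1, (h x)^2 ≤ ∫ x in (0:ℝ)..1, (deriv h x)^2 := by
  have hdc : Continuous (deriv h) := hh.continuous_deriv (by simp)
  set K := ∫ x in (0:ℝ)..1, (deriv h x)^2 with hK
  have hptw : ∀ x ∈ Icc (0:ℝ) 1, (h x)^2 ≤ K := by
    intro x hx
    have hftc : ∫ y in (0:ℝ)..x, deriv h y = h x - h 0 :=
      intervalIntegral.integral_deriv_eq_sub
        (fun y _ => (hh.differentiable (by simp) y)) (hdc.intervalIntegrable _ _)
    have hcs := cs_integral (f := fun _ => (1:ℝ)) (g := deriv h) hx.1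
      continuousOn_const hdc.continuousOn
    have e1 : (∫ y in (0:ℝ)..x, (fun _ => (1:ℝ)) y * deriv h y) = h x := by
      simpa [h0] using hftc
    have e2 : (∫ y in (0:ℝ)..x, ((fun _ => (1:ℝ)) y)^2) = x := by simp
    rw [e1, e2] at hcs
    have hmono : (∫ y in (0:ℝ)..x, (deriv h y)^2) ≤ K := by
      rw [hK]
      refine intervalIntegral.integral_mono_interval le_rfl hx.1 hx.2
        (Filter.Eventually.of_forall (fun y => sq_nonneg _))
        ((hdc.pow 2).intervalIntegrable _ _)
    have hnn : (0:ℝ) ≤ ∫ y in (0:ℝ)..x, (deriv h y)^2 :=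
      intervalIntegral.integral_nonneg hx.1 (fun y _ => sq_nonneg (deriv h y))
    nlinarith [hcs, hmono, hx.1, hx.2]
  calc (∫ x in (0:ℝ)..1, (h x)^2) ≤ ∫ _x in (0:ℝ)..1, K := by
        refine intervalIntegral.integral_mono_on zero_le_one
          (((hh.continuous).pow 2).intervalIntegrable _ _)
          (intervalIntegrable_const) hptw
    _ = K := by simp

lemma ibp {A B : ℝ → ℝ} (hA : ContDiff ℝ (⊤ : ℕ∞) A) (hB : ContDiff ℝ (⊤ : ℕ∞) B) :
    ∫ x in (0:ℝ)..1, A x * deriv B x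
      = A 1 * B 1 - A 0 * B 0 - ∫ x in (0:ℝ)..1, deriv A x * B x := by
  refine integral_mul_deriv_eq_deriv_mul
    (fun x _ => (hA.differentiable (by simp) x).hasDerivAt)
    (fun x _ => (hB.differentiable (by simp) x).hasDerivAt) ?_ ?_
  · exact (hA.continuous_deriv (by simp)).intervalIntegrable _ _
  · exact (hB.continuous_deriv (by simp)).intervalIntegrable _ _

end CSIBP


namespace Sm
lemma mul' {g h : ℝ → ℝ → ℝ} (hg : Sm g) (hh : Sm h) :
    Sm (fun x t => g x t * h x t) := ContDiff.mul hg hh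

lemma dt_mul {g h : ℝ → ℝ → ℝ} (hg : Sm g) (hh : Sm h) (x t : ℝ) :
    Dt (fun x t => g x t * h x t) x t = Dt g x t * h x t + g x t * Dt h x t := by
  have h1 : DifferentiableAt ℝ (fun s => g x s) t :=
    (hg.contLine_t x).differentiable (by simp) t
  have h2 : DifferentiableAt ℝ (fun s => h x s) t :=
    (hh.contLine_t x).differentiable (by simp) t
  exact deriv_fun_mul h1 h2
end Sm

noncomputable def mulInt (g h : ℝ → ℝ → ℝ) (t : ℝ) : ℝ :=
  ∫ x in (0:ℝ)..1, g x t * h x t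
noncomputable def sqInt (g : ℝ → ℝ → ℝ) (t : ℝ) : ℝ :=
  ∫ x in (0:ℝ)..1, (g x t)^2

lemma sqInt_nonneg (g : ℝ → ℝ → ℝ) (t : ℝ) : 0 ≤ sqInt g t :=
  intervalIntegral.integral_nonneg zero_le_one (fun x _ => sq_nonneg _)

lemma intervalIntegrable_line {g : ℝ → ℝ → ℝ} (hg : Sm g) (t : ℝ) :
    IntervalIntegrable (fun x => g x t) volume 0 1 :=
  ((hg.contLine_x t).continuous).intervalIntegrable _ _

lemma hasDerivAt_sqInt {g : ℝ → ℝ → ℝ} (hg : Sm g) (t : ℝ) :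
    HasDerivAt (sqInt g) (2 * mulInt g (Dt g) t) t := by
  have h2 : Sm (fun x t => g x t * g x t) := hg.mul' hg
  have hd := Sm.hasDerivAt_integral (c := fun _ => (1:ℝ)) continuousOn_const h2 t
  have e1 : (fun t => ∫ x in (0:ℝ)..1, (fun _ => (1:ℝ)) x * (g x t * g x t)) = sqInt g := by
    ext s; unfold sqInt; congr 1; ext x; ring
  have e2 : (∫ x in (0:ℝ)..1, (fun _ => (1:ℝ)) x * Dt (fun x t => g x t * g x t) x t)
      = 2 * mulInt g (Dt g) t := by
    rw [show (2 * mulInt g (Dt g) t) = ∫ x in (0:ℝ)..1, 2 * (g x t * Dt g x t) by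
      rw [intervalIntegral.integral_const_mul]; rfl]
    apply intervalIntegral.integral_congr
    intro x _
    simp only [one_mul]
    rw [hg.dt_mul hg x t]; ring
  rw [e1, e2] at hd; exact hd

lemma hasDerivAt_mulInt {g h : ℝ → ℝ → ℝ} (hg : Sm g) (hh : Sm h) (t : ℝ) :
    HasDerivAt (mulInt g h) (mulInt (Dt g) h t + mulInt g (Dt h) t) t := by
  have h2 : Sm (fun x t => g x t * h x t) := hg.mul' hh
  have hd := Sm.hasDerivAt_integral (c := fun _ => (1:ℝ)) continuousOn_const h2 t
  have e1 : (fun t => ∫ x in (0:ℝ)..1, (fun _ => (1:ℝ)) x * (g x t * h x t)) = mulInt g h := by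
    ext s; unfold mulInt; congr 1; ext x; ring
  have e2 : (∫ x in (0:ℝ)..1, (fun _ => (1:ℝ)) x * Dt (fun x t => g x t * h x t) x t)
      = mulInt (Dt g) h t + mulInt g (Dt h) t := by
    unfold mulInt
    rw [← intervalIntegral.integral_add (f := fun x => Dt g x t * h x t) (g := fun x => g x t * Dt h x t)
      ((((hg.dt).contLine_x t).continuous.mul ((hh.contLine_x t).continuous)).intervalIntegrable _ _)
      (((hg.contLine_x t).continuous.mul (((hh.dt).contLine_x t).continuous)).intervalIntegrable _ _)]
    apply intervalIntegral.integral_congr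
    intro x _
    simp only [one_mul]
    exact hg.dt_mul hh x t
  rw [e1, e2] at hd; exact hd

lemma hasDerivAt_cInt {c : ℝ → ℝ} {g : ℝ → ℝ → ℝ}
    (hc : ContinuousOn c (Icc (0:ℝ) 1)) (hg : Sm g) (t : ℝ) :
    HasDerivAt (fun t => ∫ x in (0:ℝ)..1, c x * g x t)
      (∫ x in (0:ℝ)..1, c x * Dt g x t) t :=
  Sm.hasDerivAt_integral hc hg t

lemma mulInt_comm (g h : ℝ → ℝ → ℝ) (t : ℝ) : mulInt g h t = mulInt h g t := by
  unfold mulInt; apply intervalIntegral.integral_congr; intro x _; ring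

lemma mulInt_self (g : ℝ → ℝ → ℝ) (t : ℝ) : mulInt g g t = sqInt g t := by
  unfold mulInt sqInt; apply intervalIntegral.integral_congr; intro x _; ring

lemma le_of_sq_le_sq' {a b : ℝ} (h : a^2 ≤ b^2) (hb : 0 ≤ b) : a ≤ b := by
  nlinarith [sq_nonneg (a - b), sq_nonneg (a + b)]

/-- integration by parts for `mulInt g (Dx h)`. -/
lemma ibp_mulInt {g h : ℝ → ℝ → ℝ} (hg : Sm g) (hh : Sm h) (t : ℝ) :
    mulInt g (Dx h) t
      = g 1 t * h 1 t - g 0 t * h 0 t - mulInt (Dx g) h t := by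
  have := ibp (A := fun y => g y t) (B := fun y => h y t)
    (hg.contLine_x t) (hh.contLine_x t)
  exact this

noncomputable def eps (δ : ℝ) : ℝ := min (δ/2) (1/(4*(1+δ)))
noncomputable def Gam1 (β Nf : ℝ) : ℝ := 2*β^2 + 8*Nf

lemma decay_main (k δ β : ℝ) (hk : 0 < k) (hδ : 0 < δ) (f : ℝ → ℝ)
    (hf : ContinuousOn f (Icc (0:ℝ) 1)) (u : ℝ → ℝ → ℝ) (hsm : Sm u)
    (hpde : ∀ x ∈ Icc (0:ℝ) 1, ∀ t ∈ Ici (0:ℝ),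
      Dt (Dt u) x t + Dx (Dx (Dx (Dx u))) x t
        - (β + sqInt (Dx u) t) * Dx (Dx u) x t
        = -k * u x t - δ * Dt u x t + f x)
    (hbc : ∀ t ∈ Ici (0:ℝ), u 0 t = 0 ∧ u 1 t = 0 ∧
      Dx (Dx u) 0 t = 0 ∧ Dx (Dx u) 1 t = 0) :
    ∃ Γ₀ : ℝ, 0 ≤ Γ₀ ∧ ∀ t ∈ Ici (0:ℝ),
      sqInt (Dx (Dx u)) t + sqInt (Dt u) t
        ≤ Γ₀ * Real.exp (-(eps δ) * t) + Gam1 β (∫ x in (0:ℝ)..1, (f x)^2) := by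
  -- abbreviations
  set ε := eps δ with hεdef
  set Nf := ∫ x in (0:ℝ)..1, (f x)^2 with hNfdef
  have hNf : 0 ≤ Nf := intervalIntegral.integral_nonneg zero_le_one (fun x _ => sq_nonneg _)
  have hε0 : 0 < ε := by
    refine lt_min (by linarith) (by positivity)
  have hεδ : ε ≤ δ/2 := min_le_left _ _
  have hε1δ : ε * (4*(1+δ)) ≤ 1 := by
    have h1 : ε ≤ 1/(4*(1+δ)) := min_le_right _ _
    have h2 : (0:ℝ) < 4*(1+δ) := by linarith
    calc ε * (4*(1+δ)) ≤ (1/(4*(1+δ))) * (4*(1+δ)) := by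
          exact mul_le_mul_of_nonneg_right h1 h2.le
      _ = 1 := by field_simp
  have hε14 : ε ≤ 1/4 := by nlinarith
  -- smoothness
  have hsm1 : Sm (Dx u) := hsm.dx
  have hsm2 : Sm (Dx (Dx u)) := hsm1.dx
  have hsm3 : Sm (Dx (Dx (Dx u))) := hsm2.dx
  have hsm4 : Sm (Dx (Dx (Dx (Dx u)))) := hsm3.dx
  have hsmv : Sm (Dt u) := hsm.dt
  have hsmv1 : Sm (Dx (Dt u)) := hsmv.dx
  have hsmv2 : Sm (Dx (Dx (Dt u))) := hsmv1.dx
  -- quantities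
  set m := sqInt u with hmdef
  set p := sqInt (Dx u) with hpdef
  set q := sqInt (Dx (Dx u)) with hqdef
  set r := sqInt (Dt u) with hrdef
  set GG := mulInt u (Dt u) with hGdef
  set FF := fun t => ∫ x in (0:ℝ)..1, f x * u x t with hFdef
  set W := fun t => r t + q t + β * p t + (p t)^2/2 + k * m t - 2*FF t
      + ε*(2*GG t + δ * m t) with hWdef
  set W' := fun t => 2 * mulInt (Dt u) (Dt (Dt u)) t
      + 2 * mulInt (Dx (Dx u)) (Dt (Dx (Dx u))) t
      + β * (2 * mulInt (Dx u) (Dt (Dx u)) t)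
      + p t * (2 * mulInt (Dx u) (Dt (Dx u)) t)
      + k * (2 * mulInt u (Dt u) t)
      - 2 * (∫ x in (0:ℝ)..1, f x * Dt u x t)
      + ε * (2*(mulInt (Dt u) (Dt u) t + mulInt u (Dt (Dt u)) t)
          + δ * (2 * mulInt u (Dt u) t)) with hW'def
  have hWd : ∀ t, HasDerivAt W (W' t) t := by
    intro t
    have h1 := hasDerivAt_sqInt hsmv t
    have h2 := hasDerivAt_sqInt hsm2 t
    have h3 := hasDerivAt_sqInt hsm1 t
    have h4 := hasDerivAt_sqInt hsm t
    have h5 := hasDerivAt_mulInt hsm hsmv t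
    have h6 := hasDerivAt_cInt hf hsm t
    have hp2 : HasDerivAt (fun s => (p s)^2/2) (p t * (2 * mulInt (Dx u) (Dt (Dx u)) t)) t := by
      have := (h3.pow 2).div_const 2
      exact this.congr_deriv (by ring)
    have hfin := ((((((h1.add h2).add (h3.const_mul β)).add hp2).add
      (h4.const_mul k)).sub (h6.const_mul 2)).add
      (((h5.const_mul 2).add (h4.const_mul δ)).const_mul ε))
    rw [hWdef, hW'def]
    exact hfin
  /- body -/
  have hIcc : uIcc (0:ℝ) 1 = Icc (0:ℝ) 1 := uIcc_of_le zero_le_one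
  have hm0 : ∀ t, 0 ≤ m t := fun t => sqInt_nonneg _ t
  have hp0 : ∀ t, 0 ≤ p t := fun t => sqInt_nonneg _ t
  have hq0 : ∀ t, 0 ≤ q t := fun t => sqInt_nonneg _ t
  have hr0 : ∀ t, 0 ≤ r t := fun t => sqInt_nonneg _ t
  have hmp : ∀ t ∈ Ici (0:ℝ), m t ≤ p t := by
    intro t ht
    exact poincare (hsm.contLine_x t) (hbc t ht).1
  have hcs_uu2 : ∀ t, (mulInt u (Dx (Dx u)) t)^2 ≤ m t * q t := fun t =>
    cs_integral zero_le_one ((hsm.contLine_x t).continuous.continuousOn)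
      ((hsm2.contLine_x t).continuous.continuousOn)
  have hE4 : ∀ t ∈ Ici (0:ℝ), mulInt u (Dx (Dx u)) t = -(p t) := by
    intro t ht
    have h := ibp_mulInt hsm hsm1 t
    rw [h, (hbc t ht).1, (hbc t ht).2.1, mulInt_self, ← hpdef]; ring
  have hpq : ∀ t ∈ Ici (0:ℝ), p t ≤ q t := by
    intro t ht
    rcases le_or_gt (p t) 0 with h|h
    · linarith [hq0 t]
    · nlinarith [hcs_uu2 t, hE4 t ht, hmp t ht, hq0 t]
  have hF2 : ∀ t, (FF t)^2 ≤ Nf * m t := fun t =>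
    cs_integral zero_le_one hf ((hsm.contLine_x t).continuous.continuousOn)
  have hG2 : ∀ t, (GG t)^2 ≤ m t * r t := fun t =>
    cs_integral zero_le_one ((hsm.contLine_x t).continuous.continuousOn)
      ((hsmv.contLine_x t).continuous.continuousOn)
  have hFb : ∀ t ∈ Ici (0:ℝ), 2*FF t ≤ q t/4 + 4*Nf := by
    intro t ht
    have hNm : Nf * m t ≤ Nf * q t :=
      mul_le_mul_of_nonneg_left ((hmp t ht).trans (hpq t ht)) hNf
    have h1 : (2*FF t)^2 ≤ (q t/4 + 4*Nf)^2 := by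
      nlinarith [hF2 t, sq_nonneg (q t/4 - 4*Nf)]
    exact le_of_sq_le_sq' h1 (by linarith [hq0 t])
  have hGb : ∀ t ∈ Ici (0:ℝ), 2*GG t ≤ q t + r t ∧ -(2*GG t) ≤ q t + r t := by
    intro t ht
    have hqr : m t * r t ≤ q t * r t :=
      mul_le_mul_of_nonneg_right ((hmp t ht).trans (hpq t ht)) (hr0 t)
    constructor
    · refine le_of_sq_le_sq' ?_ (by linarith [hq0 t, hr0 t])
      nlinarith [hG2 t, sq_nonneg (q t - r t)]
    · refine le_of_sq_le_sq' ?_ (by linarith [hq0 t, hr0 t])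
      nlinarith [hG2 t, sq_nonneg (q t - r t)]
  -- key identity for t > 0
  have hkey : ∀ t, 0 < t →
      W' t = -(2*δ) * r t + ε*(2*r t - 2*q t - 2*(β+p t)*p t - 2*k*m t + 2*FF t) := by
    intro t ht
    have ht' : t ∈ Ici (0:ℝ) := le_of_lt ht
    obtain ⟨hb0, hb1, hb2, hb3⟩ := hbc t ht'
    have hv0 : Dt u 0 t = 0 := by
      have hev : (fun s => u 0 s) =ᶠ[nhds t] (fun _ => (0:ℝ)) := by
        filter_upwards [eventually_gt_nhds ht] with s hs
        exact (hbc s hs.le).1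
      show deriv (fun s => u 0 s) t = 0
      rw [Filter.EventuallyEq.deriv_eq hev]; exact deriv_const t 0
    have hv1 : Dt u 1 t = 0 := by
      have hev : (fun s => u 1 s) =ᶠ[nhds t] (fun _ => (0:ℝ)) := by
        filter_upwards [eventually_gt_nhds ht] with s hs
        exact (hbc s hs.le).2.1
      show deriv (fun s => u 1 s) t = 0
      rw [Filter.EventuallyEq.deriv_eq hev]; exact deriv_const t 0
    have C0 : Dt (Dx u) = Dx (Dt u) := funext fun x => funext fun s => hsm.clairaut x s
    have C1 : Dt (Dx (Dx u)) = Dx (Dx (Dt u)) := by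
      have h := funext fun x => funext fun s => hsm1.clairaut x s
      rw [h, C0]
    have E1 : mulInt (Dt u) (Dx (Dx (Dx (Dx u)))) t
        = mulInt (Dx (Dx (Dt u))) (Dx (Dx u)) t := by
      have i1 := ibp_mulInt hsmv hsm3 t
      have i2 := ibp_mulInt hsmv1 hsm2 t
      rw [i1, i2, hv0, hv1, hb2, hb3]; ring
    have E2 : mulInt (Dx u) (Dx (Dt u)) t = -(mulInt (Dx (Dx u)) (Dt u) t) := by
      have i := ibp_mulInt hsm1 hsmv t
      rw [i, hv0, hv1]; ring
    have E3 : mulInt u (Dx (Dx (Dx (Dx u)))) t = q t := by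
      have i1 := ibp_mulInt hsm hsm3 t
      have i2 := ibp_mulInt hsm1 hsm2 t
      rw [i1, i2, hb0, hb1, hb2, hb3, mulInt_self, ← hqdef]; ring
    have hPDE : ∀ x ∈ Icc (0:ℝ) 1, Dt (Dt u) x t
        = -(Dx (Dx (Dx (Dx u))) x t) + ((β + p t) * Dx (Dx u) x t
          + (-k * u x t + (-δ * Dt u x t + f x))) := by
      intro x hx
      have h := hpde x hx t ht'
      linarith
    -- integrability of pieces
    have iv4 : IntervalIntegrable (fun x => Dt u x t * Dx (Dx (Dx (Dx u))) x t) volume 0 1 :=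
      ((hsmv.contLine_x t).continuous.mul (hsm4.contLine_x t).continuous).intervalIntegrable _ _
    have iu4 : IntervalIntegrable (fun x => u x t * Dx (Dx (Dx (Dx u))) x t) volume 0 1 :=
      ((hsm.contLine_x t).continuous.mul (hsm4.contLine_x t).continuous).intervalIntegrable _ _
    have iu2v : IntervalIntegrable (fun x => Dx (Dx u) x t * Dt u x t) volume 0 1 :=
      ((hsm2.contLine_x t).continuous.mul (hsmv.contLine_x t).continuous).intervalIntegrable _ _
    have iu2u : IntervalIntegrable (fun x => u x t * Dx (Dx u) x t) volume 0 1 :=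
      ((hsm.contLine_x t).continuous.mul (hsm2.contLine_x t).continuous).intervalIntegrable _ _
    have iuv : IntervalIntegrable (fun x => u x t * Dt u x t) volume 0 1 :=
      ((hsm.contLine_x t).continuous.mul (hsmv.contLine_x t).continuous).intervalIntegrable _ _
    have iuu : IntervalIntegrable (fun x => u x t * u x t) volume 0 1 :=
      ((hsm.contLine_x t).continuous.mul (hsm.contLine_x t).continuous).intervalIntegrable _ _
    have ivv : IntervalIntegrable (fun x => Dt u x t * Dt u x t) volume 0 1 :=
      ((hsmv.contLine_x t).continuous.mul (hsmv.contLine_x t).continuous).intervalIntegrable _ _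
    have ifv : IntervalIntegrable (fun x => f x * Dt u x t) volume 0 1 := by
      apply ContinuousOn.intervalIntegrable
      rw [hIcc]; exact hf.mul ((hsmv.contLine_x t).continuous.continuousOn)
    have ifu : IntervalIntegrable (fun x => f x * u x t) volume 0 1 := by
      apply ContinuousOn.intervalIntegrable
      rw [hIcc]; exact hf.mul ((hsm.contLine_x t).continuous.continuousOn)
    have split1 : mulInt (Dt u) (Dt (Dt u)) t
        = -(mulInt (Dt u) (Dx (Dx (Dx (Dx u)))) t)
          + ((β + p t) * mulInt (Dx (Dx u)) (Dt u) t
            + (-k * mulInt u (Dt u) t + (-δ * mulInt (Dt u) (Dt u) t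
              + (∫ x in (0:ℝ)..1, f x * Dt u x t)))) := by
      have congr1 : mulInt (Dt u) (Dt (Dt u)) t
          = ∫ x in (0:ℝ)..1, (-(Dt u x t * Dx (Dx (Dx (Dx u))) x t)
            + ((β + p t) * (Dx (Dx u) x t * Dt u x t)
              + (-k * (u x t * Dt u x t) + (-δ * (Dt u x t * Dt u x t)
                + f x * Dt u x t)))) := by
        apply intervalIntegral.integral_congr
        intro x hx
        rw [hIcc] at hx
        show Dt u x t * Dt (Dt u) x t = _
        rw [hPDE x hx]; ring
      have j1 : IntervalIntegrable (fun x => -(Dt u x t * Dx (Dx (Dx (Dx u))) x t)) volume 0 1 := by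
        exact iv4.neg
      have j2 : IntervalIntegrable (fun x => (β + p t) * (Dx (Dx u) x t * Dt u x t)) volume 0 1 := by
        exact iu2v.const_mul _
      have j3 : IntervalIntegrable (fun x => -k * (u x t * Dt u x t)) volume 0 1 := by
        exact iuv.const_mul _
      have j4 : IntervalIntegrable (fun x => -δ * (Dt u x t * Dt u x t)) volume 0 1 := by
        exact ivv.const_mul _
      have j45 : IntervalIntegrable (fun x => -δ * (Dt u x t * Dt u x t) + f x * Dt u x t) volume 0 1 := by
        exact j4.add ifv
      have j345 : IntervalIntegrable (fun x => -k * (u x t * Dt u x t) + (-δ * (Dt u x t * Dt u x t) + f x * Dt u x t)) volume 0 1 := by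
        exact j3.add j45
      have j2345 : IntervalIntegrable (fun x => (β + p t) * (Dx (Dx u) x t * Dt u x t) + (-k * (u x t * Dt u x t) + (-δ * (Dt u x t * Dt u x t) + f x * Dt u x t))) volume 0 1 := by
        exact j2.add j345
      rw [congr1,
        intervalIntegral.integral_add j1 j2345,
        intervalIntegral.integral_add j2 j345,
        intervalIntegral.integral_add j3 j45,
        intervalIntegral.integral_add j4 ifv,
        intervalIntegral.integral_neg,
        intervalIntegral.integral_const_mul, intervalIntegral.integral_const_mul,
        intervalIntegral.integral_const_mul]
      rfl
    have split2 : mulInt u (Dt (Dt u)) t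
        = -(mulInt u (Dx (Dx (Dx (Dx u)))) t)
          + ((β + p t) * mulInt u (Dx (Dx u)) t
            + (-k * mulInt u u t + (-δ * mulInt u (Dt u) t + FF t))) := by
      have congr1 : mulInt u (Dt (Dt u)) t
          = ∫ x in (0:ℝ)..1, (-(u x t * Dx (Dx (Dx (Dx u))) x t)
            + ((β + p t) * (u x t * Dx (Dx u) x t)
              + (-k * (u x t * u x t) + (-δ * (u x t * Dt u x t)
                + f x * u x t)))) := by
        apply intervalIntegral.integral_congr
        intro x hx
        rw [hIcc] at hx
        show u x t * Dt (Dt u) x t = _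
        rw [hPDE x hx]; ring
      have j1 : IntervalIntegrable (fun x => -(u x t * Dx (Dx (Dx (Dx u))) x t)) volume 0 1 := by
        exact iu4.neg
      have j2 : IntervalIntegrable (fun x => (β + p t) * (u x t * Dx (Dx u) x t)) volume 0 1 := by
        exact iu2u.const_mul _
      have j3 : IntervalIntegrable (fun x => -k * (u x t * u x t)) volume 0 1 := by
        exact iuu.const_mul _
      have j4 : IntervalIntegrable (fun x => -δ * (u x t * Dt u x t)) volume 0 1 := by
        exact iuv.const_mul _
      have j45 : IntervalIntegrable (fun x => -δ * (u x t * Dt u x t) + f x * u x t) volume 0 1 := by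
        exact j4.add ifu
      have j345 : IntervalIntegrable (fun x => -k * (u x t * u x t) + (-δ * (u x t * Dt u x t) + f x * u x t)) volume 0 1 := by
        exact j3.add j45
      have j2345 : IntervalIntegrable (fun x => (β + p t) * (u x t * Dx (Dx u) x t) + (-k * (u x t * u x t) + (-δ * (u x t * Dt u x t) + f x * u x t))) volume 0 1 := by
        exact j2.add j345
      rw [congr1,
        intervalIntegral.integral_add j1 j2345,
        intervalIntegral.integral_add j2 j345,
        intervalIntegral.integral_add j3 j45,
        intervalIntegral.integral_add j4 ifu,
        intervalIntegral.integral_neg,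
        intervalIntegral.integral_const_mul, intervalIntegral.integral_const_mul,
        intervalIntegral.integral_const_mul]
      rfl
    have hS2 : mulInt (Dx (Dx u)) (Dt (Dx (Dx u))) t
        = mulInt (Dt u) (Dx (Dx (Dx (Dx u)))) t := by
      rw [C1, mulInt_comm, ← E1]
    have hS3 : mulInt (Dx u) (Dt (Dx u)) t = -(mulInt (Dx (Dx u)) (Dt u) t) := by
      rw [C0]; exact E2
    have hmm : mulInt u u t = m t := by rw [mulInt_self, ← hmdef]
    have hrr : mulInt (Dt u) (Dt u) t = r t := by rw [mulInt_self, ← hrdef]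
    have hGG : mulInt u (Dt u) t = GG t := by rw [← hGdef]
    rw [hW'def]
    simp only
    rw [split1, split2, hS2, hS3, E3, hE4 t ht', hmm, hrr, hGG]
    ring
  -- differential inequality for t > 0
  have hineq : ∀ t, 0 < t → ε*(W t - β^2/2) + W' t ≤ 0 := by
    intro t ht
    have ht' : t ∈ Ici (0:ℝ) := le_of_lt ht
    have hWt : W t = r t + q t + β * p t + (p t)^2/2 + k * m t - 2*FF t
        + ε*(2*GG t + δ * m t) := rfl
    rw [hkey t ht, hWt]
    have h2G := (hGb t ht').1
    have hmq : m t ≤ q t := (hmp t ht').trans (hpq t ht')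
    have hβp : -(β*p t) ≤ (p t)^2/2 + β^2/2 := by nlinarith [sq_nonneg (p t + β)]
    have t3 : ε*(-(β*p t)) ≤ ε*((p t)^2/2 + β^2/2) :=
      mul_le_mul_of_nonneg_left hβp hε0.le
    have h3ε : 3*ε + ε*ε ≤ 2*δ := by nlinarith
    have t4 : 0 ≤ (2*δ - 3*ε - ε*ε) * r t :=
      mul_nonneg (by linarith) (hr0 t)
    have t1 : ε*ε*(2*GG t) ≤ ε*ε*(q t + r t) :=
      mul_le_mul_of_nonneg_left h2G (by positivity)
    have t2 : ε*ε*(δ*m t) ≤ ε*ε*(δ*q t) :=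
      mul_le_mul_of_nonneg_left (by nlinarith) (by positivity)
    have hq1 : ε*ε*(q t) + ε*ε*(δ*q t) ≤ (ε/2)*q t := by
      nlinarith [mul_nonneg hε0.le (hq0 t)]
    have hkm : 0 ≤ ε * (k * m t) := mul_nonneg hε0.le (mul_nonneg hk.le (hm0 t))
    nlinarith [t1, t2, t3, t4, hq1, hkm, mul_nonneg hε0.le (mul_nonneg hε0.le (hq0 t))]
  -- Gronwall via antitone exp-weighted function
  have hWcont : Continuous W := by
    have hd : Differentiable ℝ W := fun t => (hWd t).differentiableAt
    exact hd.continuous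
  set Z := fun t => Real.exp (ε*t) * (W t - β^2/2) with hZdef
  have hZd : ∀ t, HasDerivAt Z
      (Real.exp (ε*t) * ε * (W t - β^2/2) + Real.exp (ε*t) * W' t) t := by
    intro t
    have he : HasDerivAt (fun s : ℝ => Real.exp (ε*s)) (Real.exp (ε*t) * ε) t := by
      have h1 : HasDerivAt (fun s : ℝ => ε*s) ε t := by
        simpa using (hasDerivAt_id t).const_mul ε
      simpa using h1.exp
    exact he.mul ((hWd t).sub_const _)
  have hZanti : AntitoneOn Z (Ici 0) := by
    apply antitoneOn_of_deriv_nonpos (convex_Ici 0)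
    · exact ((Real.continuous_exp.comp (continuous_const.mul continuous_id)).mul
        (hWcont.sub continuous_const)).continuousOn
    · intro t _
      exact (hZd t).differentiableAt.differentiableWithinAt
    · intro t ht
      rw [interior_Ici] at ht
      rw [(hZd t).deriv]
      have h1 := hineq t ht
      have he : (0:ℝ) ≤ Real.exp (ε*t) := (Real.exp_pos _).le
      nlinarith [mul_le_mul_of_nonneg_left h1 he]
  refine ⟨max (2*(W 0 - β^2/2)) 0, le_max_right _ _, ?_⟩
  intro t ht
  have hZle : Z t ≤ Z 0 := hZanti self_mem_Ici ht ht
  have hexp : Real.exp (-ε*t) * Real.exp (ε*t) = 1 := by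
    rw [← Real.exp_add]; ring_nf; exact Real.exp_zero
  have hZ0 : Z 0 = W 0 - β^2/2 := by
    show Real.exp (ε*0) * (W 0 - β^2/2) = _
    rw [mul_zero, Real.exp_zero, one_mul]
  have h3 : W t - β^2/2 ≤ (W 0 - β^2/2) * Real.exp (-ε*t) := by
    have hpe : (0:ℝ) ≤ Real.exp (-ε*t) := (Real.exp_pos _).le
    calc W t - β^2/2 = (Real.exp (-ε*t) * Real.exp (ε*t)) * (W t - β^2/2) := by
          rw [hexp]; ring
      _ = Real.exp (-ε*t) * Z t := by
          have hZt : Z t = Real.exp (ε*t) * (W t - β^2/2) := rfl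
          rw [hZt]; ring
      _ ≤ Real.exp (-ε*t) * Z 0 := mul_le_mul_of_nonneg_left hZle hpe
      _ = (W 0 - β^2/2) * Real.exp (-ε*t) := by rw [hZ0]; ring
  -- coercivity at t
  have hWt : W t = r t + q t + β * p t + (p t)^2/2 + k * m t - 2*FF t
      + ε*(2*GG t + δ * m t) := rfl
  have hco : q t + r t ≤ 2 * W t + β^2 + 8*Nf := by
    have h2F := hFb t ht
    have hGneg := (hGb t ht).2
    have hβp2 : -(β^2/2) ≤ β*p t + (p t)^2/2 := by nlinarith [sq_nonneg (p t + β)]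
    have hεG : -((q t + r t)/4) ≤ ε*(2*GG t) := by
      nlinarith [mul_le_mul_of_nonneg_left hGneg hε0.le, hq0 t, hr0 t]
    have hkm : 0 ≤ k * m t := mul_nonneg hk.le (hm0 t)
    have hδm : 0 ≤ ε * (δ * m t) := mul_nonneg hε0.le (mul_nonneg hδ.le (hm0 t))
    rw [hWt]; nlinarith [hεG, hr0 t, hq0 t]
  have hfin : 2*(W 0 - β^2/2) * Real.exp (-ε*t)
      ≤ max (2*(W 0 - β^2/2)) 0 * Real.exp (-ε*t) :=
    mul_le_mul_of_nonneg_right (le_max_left _ _) (Real.exp_pos _).le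
  show q t + r t ≤ _
  rw [Gam1]
  clear_value m p q r GG FF W W' Z
  nlinarith [h3, hco, hfin]

/-- Existence of an absorbing set: there are `ϖ > 0` and `Γ₁ ≥ 0`, independent
of the solution, such that every classical solution satisfies
`E(t) ≤ Γ₀ e^{-ϖt} + Γ₁`; hence every ball of squared radius `> 1 + Γ₁` is
eventually entered and never left. -/
theorem stmt14 (k δ β : ℝ) (hk : 0 < k) (hδ : 0 < δ)
    (f : ℝ → ℝ) (hf : ContinuousOn f (Icc (0:ℝ) 1)) :
    ∃ ϖ Γ₁ : ℝ, 0 < ϖ ∧ 0 ≤ Γ₁ ∧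
      ∀ u : ℝ → ℝ → ℝ, IsBeamSol k δ β f u →
        (∃ Γ₀ : ℝ, 0 ≤ Γ₀ ∧
          ∀ t ∈ Ici (0:ℝ), beamEnergy u t ≤ Γ₀ * Real.exp (-ϖ*t) + Γ₁) ∧
        (∀ R : ℝ, 1 + Γ₁ < R → ∃ t₀ : ℝ, 0 ≤ t₀ ∧
          ∀ t : ℝ, t₀ ≤ t → beamEnergy u t < R) := by
  classical
  have hux : ux = Dx := rfl
  have hut : ut = Dt := rfl
  have hiter2 : ∀ g : ℝ → ℝ, iteratedDeriv 2 g = deriv (deriv g) := by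
    intro g
    rw [show (2:ℕ) = 1+1 from rfl, iteratedDeriv_succ, iteratedDeriv_one]
  have hiter4 : ∀ g : ℝ → ℝ, iteratedDeriv 4 g = deriv (deriv (deriv (deriv g))) := by
    intro g
    rw [show (4:ℕ) = 1+1+1+1 from rfl, iteratedDeriv_succ, iteratedDeriv_succ,
      iteratedDeriv_succ, iteratedDeriv_one]
  have huxx : ∀ (u : ℝ → ℝ → ℝ) (x t : ℝ), uxx u x t = Dx (Dx u) x t := by
    intro u x t
    rw [uxx, hiter2]; rfl
  have huxxxx : ∀ (u : ℝ → ℝ → ℝ) (x t : ℝ), uxxxx u x t = Dx (Dx (Dx (Dx u))) x t := by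
    intro u x t
    rw [uxxxx, hiter4]; rfl
  have hutt : ∀ (u : ℝ → ℝ → ℝ) (x t : ℝ), utt u x t = Dt (Dt u) x t := by
    intro u x t
    rw [utt, hiter2]; rfl
  set Nf := ∫ x in (0:ℝ)..1, (f x)^2 with hNfdef
  have hNf : 0 ≤ Nf := intervalIntegral.integral_nonneg zero_le_one (fun x _ => sq_nonneg _)
  refine ⟨eps δ, Gam1 β Nf, lt_min (by linarith) (by positivity), by rw [Gam1]; nlinarith, ?_⟩
  intro u hu
  obtain ⟨hsm, hpde, hbc⟩ := hu
  have hpde' : ∀ x ∈ Icc (0:ℝ) 1, ∀ t ∈ Ici (0:ℝ),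
      Dt (Dt u) x t + Dx (Dx (Dx (Dx u))) x t
        - (β + sqInt (Dx u) t) * Dx (Dx u) x t
        = -k * u x t - δ * Dt u x t + f x := by
    intro x hx t ht
    have h := hpde x hx t ht
    rw [hutt, huxxxx, huxx, hux] at h
    exact h
  have hbc' : ∀ t ∈ Ici (0:ℝ), u 0 t = 0 ∧ u 1 t = 0 ∧
      Dx (Dx u) 0 t = 0 ∧ Dx (Dx u) 1 t = 0 := by
    intro t ht
    obtain ⟨h1, h2, h3, h4⟩ := hbc t ht
    exact ⟨h1, h2, by rw [← huxx]; exact h3, by rw [← huxx]; exact h4⟩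
  obtain ⟨Γ₀, hΓ₀, hdec⟩ := decay_main k δ β hk hδ f hf u hsm hpde' hbc'
  have hBE : ∀ t : ℝ, beamEnergy u t = sqInt (Dx (Dx u)) t + sqInt (Dt u) t := by
    intro t
    rw [beamEnergy]
    congr 1
    · apply intervalIntegral.integral_congr
      intro x _
      show (uxx u x t)^2 = (Dx (Dx u) x t)^2
      rw [huxx]
  have hdecE : ∀ t ∈ Ici (0:ℝ),
      beamEnergy u t ≤ Γ₀ * Real.exp (-(eps δ)*t) + Gam1 β Nf := by
    intro t ht
    rw [hBE]
    exact hdec t ht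
  refine ⟨⟨Γ₀, hΓ₀, hdecE⟩, ?_⟩
  intro R hR
  have hε0 : 0 < eps δ := lt_min (by linarith) (by positivity)
  refine ⟨max 0 (Real.log (Γ₀+1) / eps δ), le_max_left _ _, ?_⟩
  intro t htt
  have ht0 : (0:ℝ) ≤ t := le_trans (le_max_left _ _) htt
  have h1 : Real.log (Γ₀+1) ≤ eps δ * t := by
    have h := le_trans (le_max_right _ _) htt
    rw [div_le_iff₀ hε0] at h
    linarith
  have h2 : Real.exp (-(eps δ)*t) ≤ 1/(Γ₀+1) := by
    rw [show -(eps δ)*t = -(eps δ*t) by ring, Real.exp_neg]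
    rw [one_div]
    refine inv_anti₀ (by linarith) ?_
    calc Γ₀+1 = Real.exp (Real.log (Γ₀+1)) := (Real.exp_log (by linarith)).symm
      _ ≤ Real.exp (eps δ*t) := Real.exp_le_exp.2 h1
  have h3 : Γ₀ * Real.exp (-(eps δ)*t) < 1 := by
    calc Γ₀ * Real.exp (-(eps δ)*t) ≤ Γ₀ * (1/(Γ₀+1)) :=
          mul_le_mul_of_nonneg_left h2 hΓ₀
      _ < 1 := by
          rw [mul_one_div, div_lt_one (by linarith)]
          linarith
  have h4 := hdecE t ht0
  linarith
end

section
/- Let u be a classical solution of the beam equation with E(0) + ‖∂ₓu(·,0)‖⁴ + ‖u(·,0)‖² ≤ R. Then there exist σ₀ > 0 and C₂ > 0 (depending only on R, ‖f‖, β, k, δ) such that for every σ ∈ (0, σ₀] and all 0 ≤ τ ≤ t, one has ∫_τ^t ‖∂ₜu(·,y)‖ dy ≤ σ·(t − τ) + C₂/σ. -/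
open Real Set MeasureTheory

noncomputable def pd (v : ℝ × ℝ) (G : ℝ × ℝ → ℝ) : ℝ × ℝ → ℝ := fun p => fderiv ℝ G p v

lemma contDiff_pd (v : ℝ × ℝ) {G : ℝ × ℝ → ℝ} (hG : ContDiff ℝ (⊤ : ℕ∞) G) : ContDiff ℝ (⊤ : ℕ∞) (pd v G) :=
  (hG.fderiv_right (by simp)).clm_apply contDiff_const

lemma hasDerivAt_slice1 {G : ℝ × ℝ → ℝ} (hG : ContDiff ℝ (⊤ : ℕ∞) G) (x t : ℝ) :
    HasDerivAt (fun y => G (y, t)) (pd (1,0) G (x,t)) x := by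
  have h1 : HasDerivAt (fun y : ℝ => ((y, t) : ℝ × ℝ)) (1, 0) x :=
    (hasDerivAt_id x).prodMk (hasDerivAt_const x t)
  exact ((hG.differentiable (by simp) (x,t)).hasFDerivAt.comp_hasDerivAt x h1)

lemma hasDerivAt_slice2 {G : ℝ × ℝ → ℝ} (hG : ContDiff ℝ (⊤ : ℕ∞) G) (x t : ℝ) :
    HasDerivAt (fun s => G (x, s)) (pd (0,1) G (x,t)) t := by
  have h1 : HasDerivAt (fun s : ℝ => ((x, s) : ℝ × ℝ)) (0, 1) t :=
    (hasDerivAt_const t x).prodMk (hasDerivAt_id t)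
  exact ((hG.differentiable (by simp) (x,t)).hasFDerivAt.comp_hasDerivAt t h1)

lemma pd_swap {G : ℝ × ℝ → ℝ} (hG : ContDiff ℝ (⊤ : ℕ∞) G) (v w : ℝ × ℝ) :
    pd v (pd w G) = pd w (pd v G) := by
  funext p
  have hdG : ∀ y, HasFDerivAt G (fderiv ℝ G y) y := fun y =>
    (hG.differentiable (by simp) y).hasFDerivAt
  have h2 : DifferentiableAt ℝ (fderiv ℝ G) p :=
    ((hG.fderiv_right (m := (⊤ : ℕ∞)) (by simp)).differentiable (by simp)) p
  have hsymm := second_derivative_symmetric hdG h2.hasFDerivAt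
  have key : ∀ a b : ℝ × ℝ, fderiv ℝ (fun q => fderiv ℝ G q a) p b
      = fderiv ℝ (fderiv ℝ G) p b a := by
    intro a b
    rw [fderiv_clm_apply h2 (differentiableAt_const a)]
    simp
  show fderiv ℝ (fun q => fderiv ℝ G q w) p v = fderiv ℝ (fun q => fderiv ℝ G q v) p w
  rw [key w v, key v w]
  exact hsymm v w

lemma cont_slice1 {G : ℝ × ℝ → ℝ} (hG : Continuous G) (t : ℝ) :
    Continuous fun x => G (x, t) := hG.comp (continuous_id.prodMk continuous_const)

lemma hasDerivAt_intParam (g g' : ℝ → ℝ → ℝ)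
    (hgc : ∀ s : ℝ, ContinuousOn (fun x => g x s) (Icc 0 1))
    (hg'c : ContinuousOn (fun p : ℝ × ℝ => g' p.1 p.2) (Icc 0 1 ×ˢ (univ : Set ℝ)))
    (hd : ∀ x ∈ Icc (0:ℝ) 1, ∀ s : ℝ, HasDerivAt (fun r => g x r) (g' x s) s) (t₀ : ℝ) :
    HasDerivAt (fun s => ∫ x in (0:ℝ)..1, g x s) (∫ x in (0:ℝ)..1, g' x t₀) t₀ := by
  obtain ⟨C, hC⟩ : ∃ C, ∀ p ∈ Icc (0:ℝ) 1 ×ˢ Icc (t₀-1) (t₀+1), ‖g' p.1 p.2‖ ≤ C :=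
    (isCompact_Icc.prod isCompact_Icc).exists_bound_of_continuousOn
      (hg'c.mono (prod_mono_right (subset_univ _)))
  have hsub : Set.uIoc (0:ℝ) 1 ⊆ Icc 0 1 := by
    rw [uIoc_of_le zero_le_one]; exact Ioc_subset_Icc_self
  have hmeas : ∀ s : ℝ, AEStronglyMeasurable (fun x => g x s) (volume.restrict (Set.uIoc (0:ℝ) 1)) := by
    intro s
    exact ((hgc s).aestronglyMeasurable measurableSet_Icc).mono_measure
      (Measure.restrict_mono hsub le_rfl)
  have hco : ContinuousOn (fun x => g' x t₀) (Icc (0:ℝ) 1) := by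
    have hm : ContinuousOn (fun x : ℝ => ((x, t₀) : ℝ × ℝ)) (Icc (0:ℝ) 1) :=
      (continuous_id.prodMk continuous_const).continuousOn
    exact hg'c.comp hm (fun x hx => ⟨hx, mem_univ _⟩)
  have hmeas' : AEStronglyMeasurable (fun x => g' x t₀) (volume.restrict (Set.uIoc (0:ℝ) 1)) :=
    (hco.aestronglyMeasurable measurableSet_Icc).mono_measure
      (Measure.restrict_mono hsub le_rfl)
  have hint : IntervalIntegrable (fun x => g x t₀) volume 0 1 :=
    ContinuousOn.intervalIntegrable (by rw [uIcc_of_le (zero_le_one : (0:ℝ) ≤ 1)]; exact hgc t₀)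
  have H := intervalIntegral.hasDerivAt_integral_of_dominated_loc_of_deriv_le
    (F := fun s x => g x s) (F' := fun s x => g' x s) (bound := fun _ => C) (a := 0) (b := 1)
    (μ := volume) (x₀ := t₀) (Metric.ball_mem_nhds t₀ one_pos)
    (Filter.Eventually.of_forall fun s => hmeas s) hint hmeas'
    (Filter.Eventually.of_forall ?_) intervalIntegrable_const
    (Filter.Eventually.of_forall ?_)
  · exact H.2
  · intro x hx s hs
    have hx' : x ∈ Icc (0:ℝ) 1 := hsub hx
    have hs' : s ∈ Icc (t₀-1) (t₀+1) := by
      rw [Metric.mem_ball, Real.dist_eq, abs_lt] at hs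
      constructor <;> linarith [hs.1, hs.2]
    exact hC (x, s) ⟨hx', hs'⟩
  · intro x hx s _
    exact hd x (hsub hx) s

lemma hasDerivAt_int_sq {G : ℝ × ℝ → ℝ} (hG : ContDiff ℝ (⊤ : ℕ∞) G) (t : ℝ) :
    HasDerivAt (fun s => ∫ x in (0:ℝ)..1, (G (x, s))^2)
      (∫ x in (0:ℝ)..1, 2 * G (x, t) * pd (0,1) G (x, t)) t := by
  refine hasDerivAt_intParam (fun x s => (G (x,s))^2)
    (fun x s => 2 * G (x,s) * pd (0,1) G (x,s)) ?_ ?_ ?_ t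
  · intro s; exact ((cont_slice1 hG.continuous s).pow 2).continuousOn
  · exact ((continuous_const.mul hG.continuous).mul (contDiff_pd _ hG).continuous).continuousOn
  · intro x _ s
    have h := (hasDerivAt_slice2 hG x s).fun_pow 2
    simpa [pow_one] using h

lemma hasDerivAt_int_f {G : ℝ × ℝ → ℝ} (hG : ContDiff ℝ (⊤ : ℕ∞) G) {f : ℝ → ℝ}
    (hf : ContinuousOn f (Icc 0 1)) (t : ℝ) :
    HasDerivAt (fun s => ∫ x in (0:ℝ)..1, f x * G (x, s))
      (∫ x in (0:ℝ)..1, f x * pd (0,1) G (x, t)) t := by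
  refine hasDerivAt_intParam (fun x s => f x * G (x,s))
    (fun x s => f x * pd (0,1) G (x,s)) ?_ ?_ ?_ t
  · intro s; exact hf.mul (cont_slice1 hG.continuous s).continuousOn
  · exact (hf.comp continuous_fst.continuousOn (fun p hp => hp.1)).mul
      (contDiff_pd _ hG).continuous.continuousOn
  · intro x _ s
    exact (hasDerivAt_slice2 hG x s).const_mul (f x)

lemma ibp_s16 {G H : ℝ × ℝ → ℝ} (hG : ContDiff ℝ (⊤ : ℕ∞) G) (hH : ContDiff ℝ (⊤ : ℕ∞) H) (t : ℝ) :
    ∫ x in (0:ℝ)..1, G (x,t) * pd (1,0) H (x,t)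
      = G (1,t) * H (1,t) - G (0,t) * H (0,t)
        - ∫ x in (0:ℝ)..1, pd (1,0) G (x,t) * H (x,t) := by
  exact intervalIntegral.integral_mul_deriv_eq_deriv_mul
    (u := fun x => G (x,t)) (v := fun x => H (x,t))
    (u' := fun x => pd (1,0) G (x,t)) (v' := fun x => pd (1,0) H (x,t))
    (fun x _ => hasDerivAt_slice1 hG x t)
    (fun x _ => hasDerivAt_slice1 hH x t)
    ((cont_slice1 (contDiff_pd _ hG).continuous t).intervalIntegrable 0 1)
    ((cont_slice1 (contDiff_pd _ hH).continuous t).intervalIntegrable 0 1)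

lemma deriv_zero_on_right {g : ℝ → ℝ} {d t : ℝ} (h : HasDerivAt g d t) (ht : 0 ≤ t)
    (hg : ∀ s : ℝ, 0 ≤ s → g s = 0) : d = 0 := by
  have h1 : HasDerivWithinAt g d (Ioi t) t := h.hasDerivWithinAt
  have h2 : HasDerivWithinAt g 0 (Ioi t) t := by
    have h0 : HasDerivWithinAt (fun _ : ℝ => (0:ℝ)) 0 (Ioi t) t := hasDerivWithinAt_const t _ 0
    exact h0.congr (fun s hs => hg s (le_of_lt (lt_of_le_of_lt ht hs))) (hg t ht)
  have e1 := h1.derivWithin (uniqueDiffWithinAt_Ioi t)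
  have e2 := h2.derivWithin (uniqueDiffWithinAt_Ioi t)
  rw [e1] at e2; exact e2

noncomputable def beamP (F : ℝ × ℝ → ℝ) (s : ℝ) : ℝ := ∫ x in (0:ℝ)..1, (pd (1,0) F (x,s))^2
noncomputable def beamA' (F : ℝ × ℝ → ℝ) (s : ℝ) : ℝ := ∫ x in (0:ℝ)..1, (pd (0,1) F (x,s))^2
noncomputable def beamV (k β : ℝ) (f : ℝ → ℝ) (F : ℝ × ℝ → ℝ) (s : ℝ) : ℝ :=
  beamA' F s + (∫ x in (0:ℝ)..1, (pd (1,0) (pd (1,0) F) (x,s))^2) + β * beamP F s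
    + k * (∫ x in (0:ℝ)..1, (F (x,s))^2) - 2 * (∫ x in (0:ℝ)..1, f x * F (x,s))
    + 1/2 * (beamP F s * beamP F s)

lemma beamV_deriv {k δ β : ℝ} {f : ℝ → ℝ} {F : ℝ × ℝ → ℝ}
    (hF : ContDiff ℝ (⊤ : ℕ∞) F) (hf : ContinuousOn f (Icc 0 1))
    (hpde : ∀ x ∈ Icc (0:ℝ) 1, ∀ t : ℝ, 0 ≤ t →
      pd (0,1) (pd (0,1) F) (x,t) + pd (1,0) (pd (1,0) (pd (1,0) (pd (1,0) F))) (x,t)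
        - (β + beamP F t) * pd (1,0) (pd (1,0) F) (x,t)
        = -k * F (x,t) - δ * pd (0,1) F (x,t) + f x)
    (hb0 : ∀ s : ℝ, 0 ≤ s → F (0, s) = 0) (hb1 : ∀ s : ℝ, 0 ≤ s → F (1, s) = 0)
    (hx0 : ∀ s : ℝ, 0 ≤ s → pd (1,0) (pd (1,0) F) (0, s) = 0)
    (hx1 : ∀ s : ℝ, 0 ≤ s → pd (1,0) (pd (1,0) F) (1, s) = 0)
    (t : ℝ) (ht : 0 ≤ t) :
    HasDerivAt (beamV k β f F) (-(2*δ) * beamA' F t) t := by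
  have hF10 := contDiff_pd (1,0) hF
  have hF01 := contDiff_pd (0,1) hF
  have hF20 := contDiff_pd (1,0) hF10
  have hF30 := contDiff_pd (1,0) hF20
  have hF40 := contDiff_pd (1,0) hF30
  have hF02 := contDiff_pd (0,1) hF01
  have hFx01 := contDiff_pd (1,0) hF01
  have bd0 : ∀ s : ℝ, 0 ≤ s → pd (0,1) F (0,s) = 0 := fun s hs =>
    deriv_zero_on_right (hasDerivAt_slice2 hF 0 s) hs (fun r hr => hb0 r hr)
  have bd1 : ∀ s : ℝ, 0 ≤ s → pd (0,1) F (1,s) = 0 := fun s hs =>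
    deriv_zero_on_right (hasDerivAt_slice2 hF 1 s) hs (fun r hr => hb1 r hr)
  have s1 : pd (0,1) (pd (1,0) F) = pd (1,0) (pd (0,1) F) := pd_swap hF (0,1) (1,0)
  have s2 : pd (0,1) (pd (1,0) (pd (1,0) F)) = pd (1,0) (pd (1,0) (pd (0,1) F)) := by
    rw [pd_swap hF10 (0,1) (1,0), s1]
  have h1 := hasDerivAt_int_sq hF01 t
  have h2 := hasDerivAt_int_sq hF20 t
  have h3 := hasDerivAt_int_sq hF10 t
  have h4 := hasDerivAt_int_sq hF t
  have h5 := hasDerivAt_int_f hF hf t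
  have h6 := (h3.mul h3).const_mul ((1:ℝ)/2)
  have hbig := (((((h1.add h2).add (h3.const_mul β)).add (h4.const_mul k)).sub
      (h5.const_mul 2)).add h6)
  have ia : ∫ x in (0:ℝ)..1, pd (1,0) (pd (1,0) F) (x,t) * pd (1,0) (pd (1,0) (pd (0,1) F)) (x,t)
      = - ∫ x in (0:ℝ)..1, pd (1,0) (pd (1,0) (pd (1,0) F)) (x,t) * pd (1,0) (pd (0,1) F) (x,t) := by
    rw [ibp_s16 hF20 hFx01 t, hx0 t ht, hx1 t ht]; ring
  have ib : ∫ x in (0:ℝ)..1, pd (1,0) (pd (1,0) (pd (1,0) F)) (x,t) * pd (1,0) (pd (0,1) F) (x,t)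
      = - ∫ x in (0:ℝ)..1, pd (1,0) (pd (1,0) (pd (1,0) (pd (1,0) F))) (x,t) * pd (0,1) F (x,t) := by
    rw [ibp_s16 hF30 hF01 t, bd0 t ht, bd1 t ht]; ring
  have ic : ∫ x in (0:ℝ)..1, pd (1,0) F (x,t) * pd (1,0) (pd (0,1) F) (x,t)
      = - ∫ x in (0:ℝ)..1, pd (1,0) (pd (1,0) F) (x,t) * pd (0,1) F (x,t) := by
    rw [ibp_s16 hF10 hF01 t, bd0 t ht, bd1 t ht]; ring
  have d1eq : (∫ x in (0:ℝ)..1, 2 * pd (0,1) F (x,t) * pd (0,1) (pd (0,1) F) (x,t))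
      = 2 * ∫ x in (0:ℝ)..1, pd (0,1) F (x,t) * pd (0,1) (pd (0,1) F) (x,t) := by
    simp only [mul_assoc]; exact intervalIntegral.integral_const_mul 2 _
  have d2eq : (∫ x in (0:ℝ)..1, 2 * pd (1,0) (pd (1,0) F) (x,t) * pd (0,1) (pd (1,0) (pd (1,0) F)) (x,t))
      = 2 * ∫ x in (0:ℝ)..1, pd (1,0) (pd (1,0) (pd (1,0) (pd (1,0) F))) (x,t) * pd (0,1) F (x,t) := by
    simp only [s2, mul_assoc]
    rw [intervalIntegral.integral_const_mul, ia, ib]; ring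
  have d3eq : (∫ x in (0:ℝ)..1, 2 * pd (1,0) F (x,t) * pd (0,1) (pd (1,0) F) (x,t))
      = -(2 * ∫ x in (0:ℝ)..1, pd (1,0) (pd (1,0) F) (x,t) * pd (0,1) F (x,t)) := by
    simp only [s1, mul_assoc]
    rw [intervalIntegral.integral_const_mul, ic]; ring
  have d4eq : (∫ x in (0:ℝ)..1, 2 * F (x,t) * pd (0,1) F (x,t))
      = 2 * ∫ x in (0:ℝ)..1, F (x,t) * pd (0,1) F (x,t) := by
    simp only [mul_assoc]; exact intervalIntegral.integral_const_mul 2 _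
  have I1 : IntervalIntegrable (fun x => pd (0,1) F (x,t) * pd (0,1) (pd (0,1) F) (x,t)) volume 0 1 :=
    ((cont_slice1 hF01.continuous t).mul (cont_slice1 hF02.continuous t)).intervalIntegrable 0 1
  have I2 : IntervalIntegrable (fun x => pd (1,0) (pd (1,0) (pd (1,0) (pd (1,0) F))) (x,t) * pd (0,1) F (x,t)) volume 0 1 :=
    ((cont_slice1 hF40.continuous t).mul (cont_slice1 hF01.continuous t)).intervalIntegrable 0 1
  have I3 : IntervalIntegrable (fun x => pd (1,0) (pd (1,0) F) (x,t) * pd (0,1) F (x,t)) volume 0 1 :=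
    ((cont_slice1 hF20.continuous t).mul (cont_slice1 hF01.continuous t)).intervalIntegrable 0 1
  have I4 : IntervalIntegrable (fun x => F (x,t) * pd (0,1) F (x,t)) volume 0 1 :=
    ((cont_slice1 hF.continuous t).mul (cont_slice1 hF01.continuous t)).intervalIntegrable 0 1
  have I5 : IntervalIntegrable (fun x => f x * pd (0,1) F (x,t)) volume 0 1 := by
    apply ContinuousOn.intervalIntegrable
    rw [uIcc_of_le (zero_le_one : (0:ℝ) ≤ 1)]
    exact hf.mul (cont_slice1 hF01.continuous t).continuousOn
  have key : (∫ x in (0:ℝ)..1, pd (0,1) F (x,t) * pd (0,1) (pd (0,1) F) (x,t))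
      + (∫ x in (0:ℝ)..1, pd (1,0) (pd (1,0) (pd (1,0) (pd (1,0) F))) (x,t) * pd (0,1) F (x,t))
      - (β + beamP F t) * (∫ x in (0:ℝ)..1, pd (1,0) (pd (1,0) F) (x,t) * pd (0,1) F (x,t))
      + k * (∫ x in (0:ℝ)..1, F (x,t) * pd (0,1) F (x,t))
      - (∫ x in (0:ℝ)..1, f x * pd (0,1) F (x,t))
      = -δ * beamA' F t := by
    have lin : (∫ x in (0:ℝ)..1,
        (pd (0,1) F (x,t) * pd (0,1) (pd (0,1) F) (x,t)
          + pd (1,0) (pd (1,0) (pd (1,0) (pd (1,0) F))) (x,t) * pd (0,1) F (x,t)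
          - (β + beamP F t) * (pd (1,0) (pd (1,0) F) (x,t) * pd (0,1) F (x,t))
          + k * (F (x,t) * pd (0,1) F (x,t))
          - f x * pd (0,1) F (x,t)))
        = (∫ x in (0:ℝ)..1, pd (0,1) F (x,t) * pd (0,1) (pd (0,1) F) (x,t))
          + (∫ x in (0:ℝ)..1, pd (1,0) (pd (1,0) (pd (1,0) (pd (1,0) F))) (x,t) * pd (0,1) F (x,t))
          - (β + beamP F t) * (∫ x in (0:ℝ)..1, pd (1,0) (pd (1,0) F) (x,t) * pd (0,1) F (x,t))
          + k * (∫ x in (0:ℝ)..1, F (x,t) * pd (0,1) F (x,t))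
          - (∫ x in (0:ℝ)..1, f x * pd (0,1) F (x,t)) := by
      rw [intervalIntegral.integral_sub (((I1.add I2).sub (I3.const_mul (β + beamP F t))).add (I4.const_mul k)) I5,
        intervalIntegral.integral_add ((I1.add I2).sub (I3.const_mul (β + beamP F t))) (I4.const_mul k),
        intervalIntegral.integral_sub (I1.add I2) (I3.const_mul (β + beamP F t)),
        intervalIntegral.integral_add I1 I2,
        intervalIntegral.integral_const_mul, intervalIntegral.integral_const_mul]
    rw [← lin]
    have hpt : EqOn (fun x => (pd (0,1) F (x,t) * pd (0,1) (pd (0,1) F) (x,t)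
          + pd (1,0) (pd (1,0) (pd (1,0) (pd (1,0) F))) (x,t) * pd (0,1) F (x,t)
          - (β + beamP F t) * (pd (1,0) (pd (1,0) F) (x,t) * pd (0,1) F (x,t))
          + k * (F (x,t) * pd (0,1) F (x,t))
          - f x * pd (0,1) F (x,t)))
        (fun x => -δ * (pd (0,1) F (x,t))^2) (uIcc (0:ℝ) 1) := by
      rw [uIcc_of_le (zero_le_one : (0:ℝ) ≤ 1)]
      intro x hx
      have h := hpde x hx t ht
      dsimp only
      linear_combination (pd (0,1) F (x,t)) * h
    rw [intervalIntegral.integral_congr hpt, intervalIntegral.integral_const_mul]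
    rfl
  have hPb : (∫ x in (0:ℝ)..1, (pd (1,0) F (x,t))^2) = beamP F t := rfl
  have hVb : beamV k β f F = fun s =>
      (∫ x in (0:ℝ)..1, (pd (0,1) F (x,s))^2)
        + (∫ x in (0:ℝ)..1, (pd (1,0) (pd (1,0) F) (x,s))^2)
        + β * (∫ x in (0:ℝ)..1, (pd (1,0) F (x,s))^2)
        + k * (∫ x in (0:ℝ)..1, (F (x,s))^2)
        - 2 * (∫ x in (0:ℝ)..1, f x * F (x,s))
        + 1/2 * ((∫ x in (0:ℝ)..1, (pd (1,0) F (x,s))^2)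
            * (∫ x in (0:ℝ)..1, (pd (1,0) F (x,s))^2)) := rfl
  rw [hVb]
  refine hbig.congr_deriv ?_
  symm
  rw [d1eq, d2eq, d3eq, d4eq, hPb]
  linear_combination -2 * key

lemma cross_bound₁ {k : ℝ} (hk : 0 < k) {f : ℝ → ℝ} (hf : ContinuousOn f (Icc (0:ℝ) 1))
    {F : ℝ × ℝ → ℝ} (hF : ContDiff ℝ (⊤ : ℕ∞) F) (s : ℝ) :
    0 ≤ k * (∫ x in (0:ℝ)..1, (F (x,s))^2) - 2 * (∫ x in (0:ℝ)..1, f x * F (x,s))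
      + (∫ x in (0:ℝ)..1, (f x)^2)/k := by
  have I4 : IntervalIntegrable (fun x => (F (x,s))^2) volume 0 1 :=
    ((cont_slice1 hF.continuous s).pow 2).intervalIntegrable 0 1
  have hfI : IntervalIntegrable (fun x => f x * F (x,s)) volume 0 1 := by
    apply ContinuousOn.intervalIntegrable
    rw [uIcc_of_le (zero_le_one : (0:ℝ) ≤ 1)]
    exact hf.mul (cont_slice1 hF.continuous s).continuousOn
  have hf2 : IntervalIntegrable (fun x => (f x)^2) volume 0 1 := by
    apply ContinuousOn.intervalIntegrable
    rw [uIcc_of_le (zero_le_one : (0:ℝ) ≤ 1)]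
    exact hf.pow 2
  have lin : (∫ x in (0:ℝ)..1, (k * (F (x,s))^2 - 2 * (f x * F (x,s)) + (1/k) * (f x)^2))
      = k * (∫ x in (0:ℝ)..1, (F (x,s))^2) - 2 * (∫ x in (0:ℝ)..1, f x * F (x,s))
        + (1/k) * (∫ x in (0:ℝ)..1, (f x)^2) := by
    rw [intervalIntegral.integral_add ((I4.const_mul k).sub (hfI.const_mul 2)) (hf2.const_mul (1/k)),
        intervalIntegral.integral_sub (I4.const_mul k) (hfI.const_mul 2),
        intervalIntegral.integral_const_mul, intervalIntegral.integral_const_mul,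
        intervalIntegral.integral_const_mul]
  have pos : 0 ≤ ∫ x in (0:ℝ)..1, (k * (F (x,s))^2 - 2 * (f x * F (x,s)) + (1/k) * (f x)^2) := by
    apply intervalIntegral.integral_nonneg zero_le_one
    intro x _
    have h := div_nonneg (sq_nonneg (k * F (x,s) - f x)) hk.le
    have e : (k * F (x,s) - f x)^2 / k = k * (F (x,s))^2 - 2 * (f x * F (x,s)) + (1/k) * (f x)^2 := by
      field_simp
      ring
    rw [e] at h
    exact h
  rw [lin] at pos
  have e2 : (1/k) * (∫ x in (0:ℝ)..1, (f x)^2) = (∫ x in (0:ℝ)..1, (f x)^2)/k := by ring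
  linarith [pos, e2 ▸ pos]

lemma cross_bound₂ {k : ℝ} (hk : 0 < k) {f : ℝ → ℝ} (hf : ContinuousOn f (Icc (0:ℝ) 1))
    {F : ℝ × ℝ → ℝ} (hF : ContDiff ℝ (⊤ : ℕ∞) F) (s : ℝ) :
    0 ≤ k * (∫ x in (0:ℝ)..1, (F (x,s))^2) + 2 * (∫ x in (0:ℝ)..1, f x * F (x,s))
      + (∫ x in (0:ℝ)..1, (f x)^2)/k := by
  have I4 : IntervalIntegrable (fun x => (F (x,s))^2) volume 0 1 :=
    ((cont_slice1 hF.continuous s).pow 2).intervalIntegrable 0 1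
  have hfI : IntervalIntegrable (fun x => f x * F (x,s)) volume 0 1 := by
    apply ContinuousOn.intervalIntegrable
    rw [uIcc_of_le (zero_le_one : (0:ℝ) ≤ 1)]
    exact hf.mul (cont_slice1 hF.continuous s).continuousOn
  have hf2 : IntervalIntegrable (fun x => (f x)^2) volume 0 1 := by
    apply ContinuousOn.intervalIntegrable
    rw [uIcc_of_le (zero_le_one : (0:ℝ) ≤ 1)]
    exact hf.pow 2
  have lin : (∫ x in (0:ℝ)..1, (k * (F (x,s))^2 + 2 * (f x * F (x,s)) + (1/k) * (f x)^2))
      = k * (∫ x in (0:ℝ)..1, (F (x,s))^2) + 2 * (∫ x in (0:ℝ)..1, f x * F (x,s))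
        + (1/k) * (∫ x in (0:ℝ)..1, (f x)^2) := by
    rw [intervalIntegral.integral_add ((I4.const_mul k).add (hfI.const_mul 2)) (hf2.const_mul (1/k)),
        intervalIntegral.integral_add (I4.const_mul k) (hfI.const_mul 2),
        intervalIntegral.integral_const_mul, intervalIntegral.integral_const_mul,
        intervalIntegral.integral_const_mul]
  have pos : 0 ≤ ∫ x in (0:ℝ)..1, (k * (F (x,s))^2 + 2 * (f x * F (x,s)) + (1/k) * (f x)^2) := by
    apply intervalIntegral.integral_nonneg zero_le_one
    intro x _
    have h := div_nonneg (sq_nonneg (k * F (x,s) + f x)) hk.le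
    have e : (k * F (x,s) + f x)^2 / k = k * (F (x,s))^2 + 2 * (f x * F (x,s)) + (1/k) * (f x)^2 := by
      field_simp
      ring
    rw [e] at h
    exact h
  rw [lin] at pos
  have e2 : (1/k) * (∫ x in (0:ℝ)..1, (f x)^2) = (∫ x in (0:ℝ)..1, (f x)^2)/k := by ring
  linarith [pos, e2 ▸ pos]

lemma beamV_lower {k β : ℝ} (hk : 0 < k) {f : ℝ → ℝ} (hf : ContinuousOn f (Icc (0:ℝ) 1))
    {F : ℝ × ℝ → ℝ} (hF : ContDiff ℝ (⊤ : ℕ∞) F) (s : ℝ) :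
    -(β^2/2 + (∫ x in (0:ℝ)..1, (f x)^2)/k) ≤ beamV k β f F s := by
  have hA : 0 ≤ beamA' F s :=
    intervalIntegral.integral_nonneg zero_le_one fun x _ => sq_nonneg _
  have hP : 0 ≤ beamP F s :=
    intervalIntegral.integral_nonneg zero_le_one fun x _ => sq_nonneg _
  have hX : 0 ≤ ∫ x in (0:ℝ)..1, (pd (1,0) (pd (1,0) F) (x,s))^2 :=
    intervalIntegral.integral_nonneg zero_le_one fun x _ => sq_nonneg _
  have hcross := cross_bound₁ hk hf hF s
  unfold beamV
  nlinarith [sq_nonneg (beamP F s + β)]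

lemma main_est {k δ β R : ℝ} (hk : 0 < k) (hδ : 0 < δ) (hR : 0 < R)
    {f : ℝ → ℝ} (hf : ContinuousOn f (Icc (0:ℝ) 1))
    {F : ℝ × ℝ → ℝ} (hF : ContDiff ℝ (⊤ : ℕ∞) F)
    (hpde : ∀ x ∈ Icc (0:ℝ) 1, ∀ t : ℝ, 0 ≤ t →
      pd (0,1) (pd (0,1) F) (x,t) + pd (1,0) (pd (1,0) (pd (1,0) (pd (1,0) F))) (x,t)
        - (β + beamP F t) * pd (1,0) (pd (1,0) F) (x,t)
        = -k * F (x,t) - δ * pd (0,1) F (x,t) + f x)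
    (hb0 : ∀ s : ℝ, 0 ≤ s → F (0, s) = 0) (hb1 : ∀ s : ℝ, 0 ≤ s → F (1, s) = 0)
    (hx0 : ∀ s : ℝ, 0 ≤ s → pd (1,0) (pd (1,0) F) (0, s) = 0)
    (hx1 : ∀ s : ℝ, 0 ≤ s → pd (1,0) (pd (1,0) F) (1, s) = 0)
    (hinit : (∫ x in (0:ℝ)..1, (pd (1,0) (pd (1,0) F) (x,0))^2) + beamA' F 0
        + (beamP F 0)^2 + (∫ x in (0:ℝ)..1, (F (x,0))^2) ≤ R) :
    ∃ σ₀ C₂ : ℝ, 0 < σ₀ ∧ 0 < C₂ ∧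
      ∀ σ : ℝ, 0 < σ → σ ≤ σ₀ → ∀ τ t : ℝ, 0 ≤ τ → τ ≤ t →
        (∫ y in τ..t, Real.sqrt (beamA' F y)) ≤ σ * (t - τ) + C₂/σ := by
  have h2δ : (0:ℝ) < 2*δ := by positivity
  have hQ0 : 0 ≤ ∫ x in (0:ℝ)..1, (f x)^2 :=
    intervalIntegral.integral_nonneg zero_le_one fun x _ => sq_nonneg _
  have hAco : Continuous (beamA' F) := by
    refine continuous_iff_continuousAt.mpr (fun y => ?_)
    exact (hasDerivAt_int_sq (contDiff_pd (0,1) hF) y).continuousAt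
  have hAnn : ∀ y, 0 ≤ beamA' F y := fun y =>
    intervalIntegral.integral_nonneg zero_le_one fun x _ => sq_nonneg _
  have hVd : ∀ t : ℝ, 0 ≤ t → HasDerivAt (beamV k β f F) (-(2*δ) * beamA' F t) t :=
    fun t ht => beamV_deriv hF hf hpde hb0 hb1 hx0 hx1 t ht
  have hIA : ∀ τ t : ℝ, 0 ≤ τ → τ ≤ t →
      (∫ y in τ..t, beamA' F y) = (beamV k β f F τ - beamV k β f F t) / (2*δ) := by
    intro τ t hτ hτt
    have ftc : ∫ y in τ..t, (-(2*δ) * beamA' F y)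
        = beamV k β f F t - beamV k β f F τ := by
      apply intervalIntegral.integral_eq_sub_of_hasDerivAt
      · intro y hy
        rw [uIcc_of_le hτt] at hy
        exact hVd y (le_trans hτ hy.1)
      · exact (continuous_const.mul hAco).intervalIntegrable τ t
    rw [intervalIntegral.integral_const_mul] at ftc
    rw [eq_div_iff (ne_of_gt h2δ)]
    linarith [ftc]
  -- upper bound for V at 0
  have hE0 : (∫ x in (0:ℝ)..1, (pd (1,0) (pd (1,0) F) (x,0))^2) ≤ R := by
    have h1 := hAnn 0
    have h2 : 0 ≤ (beamP F 0)^2 := sq_nonneg _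
    have h3 : 0 ≤ ∫ x in (0:ℝ)..1, (F (x,0))^2 :=
      intervalIntegral.integral_nonneg zero_le_one fun x _ => sq_nonneg _
    linarith
  have hA0 : beamA' F 0 ≤ R := by
    have h1 : 0 ≤ ∫ x in (0:ℝ)..1, (pd (1,0) (pd (1,0) F) (x,0))^2 :=
      intervalIntegral.integral_nonneg zero_le_one fun x _ => sq_nonneg _
    have h2 : 0 ≤ (beamP F 0)^2 := sq_nonneg _
    have h3 : 0 ≤ ∫ x in (0:ℝ)..1, (F (x,0))^2 :=
      intervalIntegral.integral_nonneg zero_le_one fun x _ => sq_nonneg _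
    linarith
  have hP0 : (beamP F 0)^2 ≤ R := by
    have h1 : 0 ≤ ∫ x in (0:ℝ)..1, (pd (1,0) (pd (1,0) F) (x,0))^2 :=
      intervalIntegral.integral_nonneg zero_le_one fun x _ => sq_nonneg _
    have h3 : 0 ≤ ∫ x in (0:ℝ)..1, (F (x,0))^2 :=
      intervalIntegral.integral_nonneg zero_le_one fun x _ => sq_nonneg _
    linarith [hAnn 0]
  have hU0 : (∫ x in (0:ℝ)..1, (F (x,0))^2) ≤ R := by
    have h1 : 0 ≤ ∫ x in (0:ℝ)..1, (pd (1,0) (pd (1,0) F) (x,0))^2 :=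
      intervalIntegral.integral_nonneg zero_le_one fun x _ => sq_nonneg _
    have h2 : 0 ≤ (beamP F 0)^2 := sq_nonneg _
    linarith [hAnn 0]
  have hPnn : 0 ≤ beamP F 0 :=
    intervalIntegral.integral_nonneg zero_le_one fun x _ => sq_nonneg _
  have hV0 : beamV k β f F 0 ≤ R + |β| * (1 + R) + 2*k*R + (∫ x in (0:ℝ)..1, (f x)^2)/k + R/2 := by
    have hcross := cross_bound₂ hk hf hF 0
    have hβ : β * beamP F 0 ≤ |β| * (1 + R) := by
      have h1 : β * beamP F 0 ≤ |β| * beamP F 0 :=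
        mul_le_mul_of_nonneg_right (le_abs_self β) hPnn
      have h2 : beamP F 0 ≤ 1 + R := by nlinarith [sq_nonneg (beamP F 0 - 1)]
      have h3 : |β| * beamP F 0 ≤ |β| * (1 + R) :=
        mul_le_mul_of_nonneg_left h2 (abs_nonneg β)
      linarith
    have hkU : k * (∫ x in (0:ℝ)..1, (F (x,0))^2) ≤ k * R :=
      mul_le_mul_of_nonneg_left hU0 hk.le
    have hsq : beamP F 0 * beamP F 0 = beamP F 0 ^ 2 := by ring
    have hU0nn : 0 ≤ ∫ x in (0:ℝ)..1, (F (x,0))^2 :=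
      intervalIntegral.integral_nonneg zero_le_one fun x _ => sq_nonneg _
    unfold beamV
    rw [hsq]
    linarith [hinit, hβ, hcross, hkU, hP0, sq_nonneg (beamP F 0), hU0nn, hAnn 0, hE0]
  have hVlb : ∀ s : ℝ, -(β^2/2 + (∫ x in (0:ℝ)..1, (f x)^2)/k) ≤ beamV k β f F s :=
    fun s => beamV_lower hk hf hF s
  obtain ⟨Q, hQdef⟩ : ∃ q : ℝ, q = ∫ x in (0:ℝ)..1, (f x)^2 := ⟨_, rfl⟩
  obtain ⟨B, hBdef⟩ : ∃ b : ℝ, b = R + |β| * (1 + R) + 2*k*R + Q/k + R/2 := ⟨_, rfl⟩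
  obtain ⟨M, hMdef⟩ : ∃ m : ℝ, m = (B + β^2/2 + Q/k) / (2*δ) := ⟨_, rfl⟩
  have hV0' : beamV k β f F 0 ≤ B := by rw [hBdef, hQdef]; exact hV0
  have hVlb' : ∀ s : ℝ, -(β^2/2 + Q/k) ≤ beamV k β f F s := by
    intro s; rw [hQdef]; exact hVlb s
  have hVmon : ∀ τ : ℝ, 0 ≤ τ → beamV k β f F τ ≤ beamV k β f F 0 := by
    intro τ hτ
    have h := hIA 0 τ le_rfl hτ
    have hnn : 0 ≤ ∫ y in (0:ℝ)..τ, beamA' F y :=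
      intervalIntegral.integral_nonneg hτ fun y _ => hAnn y
    rw [h, le_div_iff₀ h2δ] at hnn
    linarith
  have hM : ∀ τ t : ℝ, 0 ≤ τ → τ ≤ t → (∫ y in τ..t, beamA' F y) ≤ M := by
    intro τ t hτ hτt
    rw [hIA τ t hτ hτt, hMdef]
    have h1 := hVmon τ hτ
    have h2 := hVlb' t
    gcongr
    linarith [hV0']
  have hM0 : 0 ≤ M := by
    have h := hM 0 0 le_rfl le_rfl
    rwa [intervalIntegral.integral_same] at h
  refine ⟨1, M/4 + 1, one_pos, by positivity, ?_⟩
  intro σ hσ hσ1 τ t hτ hτt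
  have h4σ : (0:ℝ) < 4*σ := by positivity
  have mono : (∫ y in τ..t, Real.sqrt (beamA' F y))
      ≤ ∫ y in τ..t, (σ + beamA' F y/(4*σ)) := by
    apply intervalIntegral.integral_mono_on hτt
    · exact (Real.continuous_sqrt.comp hAco).intervalIntegrable τ t
    · exact (continuous_const.add (hAco.div_const _)).intervalIntegrable τ t
    · intro y _
      have hb : Real.sqrt (beamA' F y) ^ 2 = beamA' F y := Real.sq_sqrt (hAnn y)
      rw [← sub_le_iff_le_add', le_div_iff₀ h4σ]
      nlinarith [sq_nonneg (Real.sqrt (beamA' F y) - 2*σ)]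
  have eval : (∫ y in τ..t, (σ + beamA' F y/(4*σ)))
      = σ * (t - τ) + (∫ y in τ..t, beamA' F y)/(4*σ) := by
    rw [intervalIntegral.integral_add intervalIntegrable_const
        ((hAco.div_const _).intervalIntegrable τ t),
      intervalIntegral.integral_div, intervalIntegral.integral_const, smul_eq_mul]
    ring
  have last : (∫ y in τ..t, beamA' F y)/(4*σ) ≤ (M/4 + 1)/σ := by
    rw [div_le_div_iff₀ h4σ hσ]
    nlinarith [hM τ t hτ hτt, hM0, hσ, mul_le_mul_of_nonneg_right (hM τ t hτ hτt) hσ.le]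
  calc (∫ y in τ..t, Real.sqrt (beamA' F y))
      ≤ σ * (t - τ) + (∫ y in τ..t, beamA' F y)/(4*σ) := by rw [← eval]; exact mono
    _ ≤ σ * (t - τ) + (M/4 + 1)/σ := by linarith

lemma e_ux' {u : ℝ → ℝ → ℝ} (hF : ContDiff ℝ (⊤ : ℕ∞) (fun p : ℝ × ℝ => u p.1 p.2)) (x t : ℝ) :
    ux u x t = pd (1,0) (fun p : ℝ × ℝ => u p.1 p.2) (x,t) :=
  (hasDerivAt_slice1 hF x t).deriv

lemma e_ut' {u : ℝ → ℝ → ℝ} (hF : ContDiff ℝ (⊤ : ℕ∞) (fun p : ℝ × ℝ => u p.1 p.2)) (x t : ℝ) :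
    ut u x t = pd (0,1) (fun p : ℝ × ℝ => u p.1 p.2) (x,t) :=
  (hasDerivAt_slice2 hF x t).deriv

lemma e_uxx' {u : ℝ → ℝ → ℝ} (hF : ContDiff ℝ (⊤ : ℕ∞) (fun p : ℝ × ℝ => u p.1 p.2)) (x t : ℝ) :
    uxx u x t = pd (1,0) (pd (1,0) (fun p : ℝ × ℝ => u p.1 p.2)) (x,t) := by
  have d1 : deriv (fun y => u y t) = fun y => pd (1,0) (fun p : ℝ × ℝ => u p.1 p.2) (y,t) :=
    funext fun y => (hasDerivAt_slice1 hF y t).deriv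
  show iteratedDeriv 2 (fun y => u y t) x = _
  rw [show (2:ℕ) = 1+1 from rfl, iteratedDeriv_succ, iteratedDeriv_one, d1]
  exact (hasDerivAt_slice1 (contDiff_pd _ hF) x t).deriv

lemma e_utt' {u : ℝ → ℝ → ℝ} (hF : ContDiff ℝ (⊤ : ℕ∞) (fun p : ℝ × ℝ => u p.1 p.2)) (x t : ℝ) :
    utt u x t = pd (0,1) (pd (0,1) (fun p : ℝ × ℝ => u p.1 p.2)) (x,t) := by
  have d1 : deriv (fun s => u x s) = fun s => pd (0,1) (fun p : ℝ × ℝ => u p.1 p.2) (x,s) :=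
    funext fun s => (hasDerivAt_slice2 hF x s).deriv
  show iteratedDeriv 2 (fun s => u x s) t = _
  rw [show (2:ℕ) = 1+1 from rfl, iteratedDeriv_succ, iteratedDeriv_one, d1]
  exact (hasDerivAt_slice2 (contDiff_pd _ hF) x t).deriv

lemma e_uxxxx' {u : ℝ → ℝ → ℝ} (hF : ContDiff ℝ (⊤ : ℕ∞) (fun p : ℝ × ℝ => u p.1 p.2)) (x t : ℝ) :
    uxxxx u x t
      = pd (1,0) (pd (1,0) (pd (1,0) (pd (1,0) (fun p : ℝ × ℝ => u p.1 p.2)))) (x,t) := by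
  have d1 : deriv (fun y => u y t) = fun y => pd (1,0) (fun p : ℝ × ℝ => u p.1 p.2) (y,t) :=
    funext fun y => (hasDerivAt_slice1 hF y t).deriv
  have d2 : deriv (fun y => pd (1,0) (fun p : ℝ × ℝ => u p.1 p.2) (y,t))
      = fun y => pd (1,0) (pd (1,0) (fun p : ℝ × ℝ => u p.1 p.2)) (y,t) :=
    funext fun y => (hasDerivAt_slice1 (contDiff_pd _ hF) y t).deriv
  have d3 : deriv (fun y => pd (1,0) (pd (1,0) (fun p : ℝ × ℝ => u p.1 p.2)) (y,t))
      = fun y => pd (1,0) (pd (1,0) (pd (1,0) (fun p : ℝ × ℝ => u p.1 p.2))) (y,t) :=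
    funext fun y => (hasDerivAt_slice1 (contDiff_pd _ (contDiff_pd _ hF)) y t).deriv
  show iteratedDeriv 4 (fun y => u y t) x = _
  rw [show (4:ℕ) = 3+1 from rfl, iteratedDeriv_succ, show (3:ℕ) = 2+1 from rfl,
    iteratedDeriv_succ, show (2:ℕ) = 1+1 from rfl, iteratedDeriv_succ, iteratedDeriv_one,
    d1, d2, d3]
  exact (hasDerivAt_slice1 (contDiff_pd _ (contDiff_pd _ (contDiff_pd _ hF))) x t).deriv

/-- Dissipation integral: `∫_τ^t ‖∂ₜu(·,y)‖ dy ≤ σ(t-τ) + C₂/σ` for all small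
`σ > 0` and all `0 ≤ τ ≤ t`. -/
theorem stmt16 (k δ β R : ℝ) (hk : 0 < k) (hδ : 0 < δ) (hR : 0 < R)
    (f : ℝ → ℝ) (hf : ContinuousOn f (Icc (0:ℝ) 1))
    (u : ℝ → ℝ → ℝ) (hu : IsBeamSol k δ β f u)
    (hinit : beamEnergy u 0 + (∫ x in (0:ℝ)..1, (ux u x 0)^2)^2
        + (∫ x in (0:ℝ)..1, (u x 0)^2) ≤ R) :
    ∃ σ₀ C₂ : ℝ, 0 < σ₀ ∧ 0 < C₂ ∧
      ∀ σ : ℝ, 0 < σ → σ ≤ σ₀ → ∀ τ t : ℝ, 0 ≤ τ → τ ≤ t →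
        (∫ y in τ..t, Real.sqrt (∫ x in (0:ℝ)..1, (ut u x y)^2))
          ≤ σ * (t - τ) + C₂/σ := by
  obtain ⟨hF, hpde, hbc⟩ := hu
  simp only [beamEnergy] at hinit
  simp only [e_ut' hF, e_ux' hF, e_uxx' hF, e_utt' hF, e_uxxxx' hF] at hpde hbc hinit ⊢
  have hpde' : ∀ x ∈ Icc (0:ℝ) 1, ∀ t : ℝ, 0 ≤ t →
      pd (0,1) (pd (0,1) (fun p : ℝ × ℝ => u p.1 p.2)) (x,t)
        + pd (1,0) (pd (1,0) (pd (1,0) (pd (1,0) (fun p : ℝ × ℝ => u p.1 p.2)))) (x,t)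
        - (β + beamP (fun p : ℝ × ℝ => u p.1 p.2) t)
          * pd (1,0) (pd (1,0) (fun p : ℝ × ℝ => u p.1 p.2)) (x,t)
        = -k * (fun p : ℝ × ℝ => u p.1 p.2) (x,t)
          - δ * pd (0,1) (fun p : ℝ × ℝ => u p.1 p.2) (x,t) + f x :=
    fun x hx t ht => hpde x hx t ht
  have hb0 : ∀ s:ℝ, 0 ≤ s → (fun p : ℝ × ℝ => u p.1 p.2) (0,s) = 0 := fun s hs => (hbc s hs).1
  have hb1 : ∀ s:ℝ, 0 ≤ s → (fun p : ℝ × ℝ => u p.1 p.2) (1,s) = 0 := fun s hs => (hbc s hs).2.1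
  have hx0 : ∀ s:ℝ, 0 ≤ s →
      pd (1,0) (pd (1,0) (fun p : ℝ × ℝ => u p.1 p.2)) (0,s) = 0 := fun s hs => (hbc s hs).2.2.1
  have hx1 : ∀ s:ℝ, 0 ≤ s →
      pd (1,0) (pd (1,0) (fun p : ℝ × ℝ => u p.1 p.2)) (1,s) = 0 := fun s hs => (hbc s hs).2.2.2
  have hinit' : (∫ x in (0:ℝ)..1, (pd (1,0) (pd (1,0) (fun p : ℝ × ℝ => u p.1 p.2)) (x,0))^2)
      + beamA' (fun p : ℝ × ℝ => u p.1 p.2) 0 + (beamP (fun p : ℝ × ℝ => u p.1 p.2) 0)^2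
      + (∫ x in (0:ℝ)..1, ((fun p : ℝ × ℝ => u p.1 p.2) (x,0))^2) ≤ R := hinit
  obtain ⟨σ₀, C₂, hσ₀, hC₂, hmain⟩ := main_est hk hδ hR hf hF hpde' hb0 hb1 hx0 hx1 hinit'
  exact ⟨σ₀, C₂, hσ₀, hC₂, fun σ hσ hσ1 τ t hτ hτt => hmain σ hσ hσ1 τ t hτ hτt⟩
end
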